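/- arXiv:0712.2904 — 3 statements merged into one kernel-verified Lean document; each statement's English description precedes it below -/
import Mathlib

section
/- Let ε be a type, inv : ε → ε a map, and σ : ε → ℝ. For a list w = [e₀, …, e_{m−1}] over ε define φ(w) = Σ over noncrossing perfect pairings π of Fin m of Π over blocks {i, j} of π with i < j of (if e_j = inv(e_i) then σ(e_i) else 0); thus φ(w) = 0 if m is odd and φ([]) = 1. Then φ satisfies, for every e : ε and every list w, the recursion φ(e :: w) = Σ over decompositions w = w₁ ++ (f :: w₂) of (if f = inv(e) then σ(e) else 0)·φ(w₁)·φ(w₂); moreover φ is the unique function on lists over ε with φ([]) = 1 satisfying this recursion. (This is the paper's Lemma characterizing the vertex-evaluated trace φ_v(x) = Σ_{π∈NCP(2k)} Π_{{i,j}⊂π} σ(e_i)·δ_{e_i = e_j^o} for the planar algebra of a bipartite graph.) -/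
open scoped Classical

/-- A finite set of blocks is a perfect pairing of `Fin m`: every block has two
elements, every element lies in a block, and blocks are pairwise disjoint. -/
def IsPairing {m : ℕ} (P : Finset (Finset (Fin m))) : Prop :=
  (∀ B ∈ P, B.card = 2) ∧
  (∀ i : Fin m, ∃ B ∈ P, i ∈ B) ∧
  (∀ B ∈ P, ∀ B' ∈ P, ∀ i : Fin m, i ∈ B → i ∈ B' → B = B')

/-- Noncrossing: there are no `a < b < c < d` with `a, c` in one block and
`b, d` in a different block. -/
def IsNoncrossing {m : ℕ} (P : Finset (Finset (Fin m))) : Prop :=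
  ¬ ∃ a b c d : Fin m, a < b ∧ b < c ∧ c < d ∧
      ∃ B ∈ P, ∃ B' ∈ P, B ≠ B' ∧ a ∈ B ∧ c ∈ B ∧ b ∈ B' ∧ d ∈ B'

/-- The finite set of noncrossing perfect pairings of `Fin m`. -/
noncomputable def ncPairings (m : ℕ) : Finset (Finset (Finset (Fin m))) :=
  Finset.univ.filter fun P => IsPairing P ∧ IsNoncrossing P

/-- The weight of a block `{i, j}` with `i < j`:
`σ(e_i)` if `e_j = inv (e_i)` and `0` otherwise. -/
noncomputable def blockVal {ε : Type*} (inv : ε → ε) (σ : ε → ℝ) (w : List ε)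
    (B : Finset (Fin w.length)) : ℝ :=
  if h : B.Nonempty then
    if w.get (B.max' h) = inv (w.get (B.min' h)) then σ (w.get (B.min' h)) else 0
  else 0

/-- `φ(w) = Σ_{π ∈ NCP(m)} Π_{{i,j} ⊂ π, i<j} σ(e_i) δ_{e_j = e_i^o}`, the
vertex-evaluated trace of the paper on the word `w = [e₀, …, e_{m−1}]`. -/
noncomputable def phi {ε : Type*} (inv : ε → ε) (σ : ε → ℝ) (w : List ε) : ℝ :=
  ∑ P ∈ ncPairings w.length, ∏ B ∈ P, blockVal inv σ w B

namespace PhiAux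

variable {ε : Type*} (inv : ε → ε) (σ : ε → ℝ)

/-- Block value relative to a function on indices. -/
noncomputable def BV {n : ℕ} (f : Fin n → ε) (B : Finset (Fin n)) : ℝ :=
  if h : B.Nonempty then
    if f (B.max' h) = inv (f (B.min' h)) then σ (f (B.min' h)) else 0
  else 0

/-- A pairing of a subset `S` of `Fin n`. -/
def IsPairingOn {n : ℕ} (S : Finset (Fin n)) (P : Finset (Finset (Fin n))) : Prop :=
  (∀ B ∈ P, B.card = 2) ∧ (∀ B ∈ P, B ⊆ S) ∧
  (∀ i ∈ S, ∃ B ∈ P, i ∈ B) ∧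
  (∀ B ∈ P, ∀ B' ∈ P, ∀ i, i ∈ B → i ∈ B' → B = B')

noncomputable def pairingsOn {n : ℕ} (S : Finset (Fin n)) :
    Finset (Finset (Finset (Fin n))) :=
  Finset.univ.filter fun P => IsPairingOn S P ∧ IsNoncrossing P

noncomputable def F {n : ℕ} (f : Fin n → ε) (S : Finset (Fin n)) : ℝ :=
  ∑ P ∈ pairingsOn S, ∏ B ∈ P, BV inv σ f B

lemma blockVal_eq (w : List ε) (B : Finset (Fin w.length)) :
    blockVal inv σ w B = BV inv σ w.get B := rfl

lemma phi_eq_F (w : List ε) : phi inv σ w = F inv σ w.get Finset.univ := by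
  unfold phi F ncPairings pairingsOn
  apply Finset.sum_congr
  · apply Finset.filter_congr
    intro P _
    unfold IsPairing IsPairingOn
    simp only [Finset.subset_univ, Finset.mem_univ, true_implies, true_and]
    tauto
  · intro P _; rfl

lemma max'_image' {a n : ℕ} {g : Fin a → Fin n} (hg : StrictMono g) (B : Finset (Fin a))
    (h : B.Nonempty) : (B.image g).max' (h.image g) = g (B.max' h) := by
  apply le_antisymm
  · obtain ⟨i, hi, hEq⟩ := Finset.mem_image.mp ((B.image g).max'_mem (h.image g))
    rw [← hEq]
    exact hg.monotone (B.le_max' i hi)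
  · exact (B.image g).le_max' _ (Finset.mem_image_of_mem g (B.max'_mem h))

lemma min'_image' {a n : ℕ} {g : Fin a → Fin n} (hg : StrictMono g) (B : Finset (Fin a))
    (h : B.Nonempty) : (B.image g).min' (h.image g) = g (B.min' h) := by
  apply le_antisymm
  · exact (B.image g).min'_le _ (Finset.mem_image_of_mem g (B.min'_mem h))
  · obtain ⟨i, hi, hEq⟩ := Finset.mem_image.mp ((B.image g).min'_mem (h.image g))
    rw [← hEq]
    exact hg.monotone (B.min'_le i hi)

lemma BV_image {a n : ℕ} (f : Fin n → ε) (g : Fin a → Fin n) (hg : StrictMono g)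
    (fg : Fin a → ε) (hfg : ∀ i, fg i = f (g i)) (B : Finset (Fin a)) :
    BV inv σ f (B.image g) = BV inv σ fg B := by
  unfold BV
  by_cases h : B.Nonempty
  · rw [dif_pos (h.image g), dif_pos h,
      max'_image' hg B h, min'_image' hg B h, hfg, hfg]
  · rw [dif_neg (by simpa using h), dif_neg h]

lemma mem_pairingsOn {n : ℕ} (S : Finset (Fin n)) (P : Finset (Finset (Fin n))) :
    P ∈ pairingsOn S ↔ IsPairingOn S P ∧ IsNoncrossing P := by
  simp [pairingsOn]

lemma transport {a n : ℕ} (f : Fin n → ε) (g : Fin a → Fin n) (hg : StrictMono g)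
    (fg : Fin a → ε) (hfg : ∀ i, fg i = f (g i)) :
    F inv σ fg Finset.univ = F inv σ f (Finset.univ.image g) := by
  have hinj : Function.Injective g := hg.injective
  have himg : ∀ (Q : Finset (Finset (Fin n))), Q ∈ pairingsOn (Finset.univ.image g) →
      ∀ B ∈ Q, (B.preimage g hinj.injOn).image g = B := by
    intro Q hQ B hB
    obtain ⟨⟨-, hsub, -, -⟩, -⟩ := (mem_pairingsOn _ _).mp hQ
    ext x
    simp only [Finset.mem_image, Finset.mem_preimage]
    constructor
    · rintro ⟨i, hi, rfl⟩; exact hi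
    · intro hx
      have := hsub B hB hx
      simp only [Finset.mem_image, Finset.mem_univ, true_and] at this
      obtain ⟨i, rfl⟩ := this
      exact ⟨i, hx, rfl⟩
  unfold F
  refine Finset.sum_nbij' (i := fun P => P.image (Finset.image g))
    (j := fun Q => Q.image (fun B => B.preimage g hinj.injOn)) ?_ ?_ ?_ ?_ ?_
  · -- forward membership
    intro P hP
    obtain ⟨⟨hcard, -, hcov, huniq⟩, hnc⟩ := (mem_pairingsOn _ _).mp hP
    refine (mem_pairingsOn _ _).mpr ⟨⟨?_, ?_, ?_, ?_⟩, ?_⟩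
    · intro B' hB'
      simp only [Finset.mem_image] at hB'
      obtain ⟨B, hB, rfl⟩ := hB'
      rw [Finset.card_image_of_injective _ hinj]; exact hcard B hB
    · intro B' hB'
      simp only [Finset.mem_image] at hB'
      obtain ⟨B, hB, rfl⟩ := hB'
      exact Finset.image_subset_image (Finset.subset_univ B)
    · intro x hx
      simp only [Finset.mem_image, Finset.mem_univ, true_and] at hx
      obtain ⟨i, rfl⟩ := hx
      obtain ⟨B, hB, hiB⟩ := hcov i (Finset.mem_univ i)
      exact ⟨B.image g, Finset.mem_image_of_mem _ hB, Finset.mem_image_of_mem _ hiB⟩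
    · intro B' hB' C' hC' x hxB hxC
      simp only [Finset.mem_image] at hB' hC'
      obtain ⟨B, hB, rfl⟩ := hB'
      obtain ⟨C, hC, rfl⟩ := hC'
      simp only [Finset.mem_image] at hxB hxC
      obtain ⟨i, hi, rfl⟩ := hxB
      obtain ⟨i', hi', hii'⟩ := hxC
      rw [hinj hii'] at hi'
      rw [huniq B hB C hC i hi hi']
    · rintro ⟨x1, x2, x3, x4, h12, h23, h34, B', hB', C', hC', hne, hx1, hx3, hx2, hx4⟩
      simp only [Finset.mem_image] at hB' hC'
      obtain ⟨B, hB, rfl⟩ := hB'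
      obtain ⟨C, hC, rfl⟩ := hC'
      simp only [Finset.mem_image] at hx1 hx2 hx3 hx4
      obtain ⟨a1, ha1, rfl⟩ := hx1
      obtain ⟨a3, ha3, rfl⟩ := hx3
      obtain ⟨a2, ha2, rfl⟩ := hx2
      obtain ⟨a4, ha4, rfl⟩ := hx4
      exact hnc ⟨a1, a2, a3, a4, hg.lt_iff_lt.mp h12, hg.lt_iff_lt.mp h23,
        hg.lt_iff_lt.mp h34, B, hB, C, hC, fun h => hne (by rw [h]),
        ha1, ha3, ha2, ha4⟩
  · -- backward membership
    intro Q hQ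
    have himgQ := himg Q hQ
    obtain ⟨⟨hcard, hsub, hcov, huniq⟩, hnc⟩ := (mem_pairingsOn _ _).mp hQ
    refine (mem_pairingsOn _ _).mpr ⟨⟨?_, fun B _ => Finset.subset_univ B, ?_, ?_⟩, ?_⟩
    · intro B' hB'
      simp only [Finset.mem_image] at hB'
      obtain ⟨B, hB, rfl⟩ := hB'
      rw [← Finset.card_image_of_injective (B.preimage g hinj.injOn) hinj, himgQ B hB]
      exact hcard B hB
    · intro i _
      obtain ⟨B, hB, hgi⟩ := hcov (g i) (by simp)
      exact ⟨B.preimage g hinj.injOn, Finset.mem_image_of_mem _ hB,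
        Finset.mem_preimage.mpr hgi⟩
    · intro B' hB' C' hC' i hiB hiC
      simp only [Finset.mem_image] at hB' hC'
      obtain ⟨B, hB, rfl⟩ := hB'
      obtain ⟨C, hC, rfl⟩ := hC'
      rw [Finset.mem_preimage] at hiB hiC
      rw [huniq B hB C hC (g i) hiB hiC]
    · rintro ⟨a1, a2, a3, a4, h12, h23, h34, B', hB', C', hC', hne, hx1, hx3, hx2, hx4⟩
      simp only [Finset.mem_image] at hB' hC'
      obtain ⟨B, hB, rfl⟩ := hB'
      obtain ⟨C, hC, rfl⟩ := hC'
      rw [Finset.mem_preimage] at hx1 hx2 hx3 hx4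
      exact hnc ⟨g a1, g a2, g a3, g a4, hg h12, hg h23, hg h34, B, hB, C, hC,
        fun h => hne (by rw [h]), hx1, hx3, hx2, hx4⟩
  · -- left inverse
    intro P hP
    have pre_img : ∀ B : Finset (Fin a), (B.image g).preimage g hinj.injOn = B := by
      intro B; ext x; simp [Finset.mem_preimage, hinj.eq_iff]
    ext B
    simp only [Finset.mem_image]
    constructor
    · rintro ⟨B', ⟨C, hC, rfl⟩, rfl⟩
      rwa [pre_img]
    · intro hB
      exact ⟨B.image g, ⟨B, hB, rfl⟩, pre_img B⟩
  · -- right inverse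
    intro Q hQ
    have himgQ := himg Q hQ
    ext B
    simp only [Finset.mem_image]
    constructor
    · rintro ⟨B', ⟨C, hC, rfl⟩, rfl⟩
      rwa [himgQ C hC]
    · intro hB
      exact ⟨B.preimage g hinj.injOn, ⟨B, hB, rfl⟩, himgQ B hB⟩
  · -- values
    intro P hP
    rw [Finset.prod_image (fun B _ C _ h =>
      (Finset.image_injective hinj) h)]
    exact Finset.prod_congr rfl fun B _ => (BV_image inv σ f g hg fg hfg B).symm

/-- Index of the partner of `0` in a pairing (junk value if none exists). -/
noncomputable def kOf {m : ℕ} (hm : 0 < m) (P : Finset (Finset (Fin (m + 1)))) : Fin m :=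
  if h : ∃ k : Fin m, ({0, k.succ} : Finset (Fin (m + 1))) ∈ P then h.choose else ⟨0, hm⟩

lemma kOf_spec {m : ℕ} (hm : 0 < m) {P : Finset (Finset (Fin (m + 1)))}
    (hu : ∀ B ∈ P, ∀ B' ∈ P, ∀ i, i ∈ B → i ∈ B' → B = B')
    {k : Fin m} (hk : ({0, k.succ} : Finset (Fin (m + 1))) ∈ P) : kOf hm P = k := by
  unfold kOf
  rw [dif_pos ⟨k, hk⟩]
  have h : ∃ k : Fin m, ({0, k.succ} : Finset (Fin (m + 1))) ∈ P := ⟨k, hk⟩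
  have hc := h.choose_spec
  have heq := hu _ hc _ hk 0 (by simp) (by simp)
  have hmem : (h.choose).succ ∈ ({0, k.succ} : Finset (Fin (m + 1))) := by
    rw [← heq]; simp
  simp only [Finset.mem_insert, Finset.mem_singleton] at hmem
  rcases hmem with h0 | hs
  · exact absurd h0 (Fin.succ_ne_zero _)
  · exact Fin.succ_injective _ hs

lemma exists_zero_block {m : ℕ} {P : Finset (Finset (Fin (m + 1)))}
    (hP : IsPairingOn Finset.univ P) :
    ∃ k : Fin m, ({0, k.succ} : Finset (Fin (m + 1))) ∈ P := by
  obtain ⟨hcard, -, hcov, -⟩ := hP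
  obtain ⟨B, hB, h0B⟩ := hcov 0 (Finset.mem_univ _)
  obtain ⟨x, y, hxy, rfl⟩ := Finset.card_eq_two.mp (hcard B hB)
  simp only [Finset.mem_insert, Finset.mem_singleton] at h0B
  rcases h0B with rfl | rfl
  · -- x = 0, partner y
    have hy : (y : ℕ) ≠ 0 := by
      intro h; exact hxy (Fin.ext h.symm)
    have hylt : (y : ℕ) < m + 1 := y.isLt
    refine ⟨⟨(y : ℕ) - 1, by omega⟩, ?_⟩
    have : (⟨(y : ℕ) - 1, by omega⟩ : Fin m).succ = y := by
      apply Fin.ext; simp [Fin.val_succ]; omega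
    rwa [this]
  · -- y = 0, partner x
    have hx : (x : ℕ) ≠ 0 := by
      intro h; exact hxy (Fin.ext h)
    have hxlt : (x : ℕ) < m + 1 := x.isLt
    refine ⟨⟨(x : ℕ) - 1, by omega⟩, ?_⟩
    have hsx : (⟨(x : ℕ) - 1, by omega⟩ : Fin m).succ = x := by
      apply Fin.ext; simp [Fin.val_succ]; omega
    rw [hsx]
    rwa [Finset.pair_comm] at hB

lemma block_in_halves {m : ℕ} {P : Finset (Finset (Fin (m + 1)))}
    (hP : IsPairingOn Finset.univ P) (hnc : IsNoncrossing P) {k : Fin m}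
    (hk : ({0, k.succ} : Finset (Fin (m + 1))) ∈ P)
    {B : Finset (Fin (m + 1))} (hB : B ∈ P) (hne : B ≠ {0, k.succ}) :
    B ⊆ Finset.Ioo 0 k.succ ∨ B ⊆ Finset.Ioi k.succ := by
  obtain ⟨hcard, -, -, huniq⟩ := hP
  have h0 : (0 : Fin (m + 1)) ∉ B := fun h0 => hne (huniq B hB _ hk 0 h0 (by simp))
  have hks : k.succ ∉ B := fun h => hne (huniq B hB _ hk k.succ h (by simp))
  obtain ⟨x, y, hxy, rfl⟩ := Finset.card_eq_two.mp (hcard _ hB)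
  have hmem : ∀ z ∈ ({x, y} : Finset (Fin (m + 1))),
      z ∈ Finset.Ioo (0 : Fin (m + 1)) k.succ ∨ z ∈ Finset.Ioi k.succ := by
    intro z hz
    have hz0 : (z : ℕ) ≠ 0 := fun h => h0 (by rwa [show z = 0 from Fin.ext h] at hz)
    have hzk : (z : ℕ) ≠ (k : ℕ) + 1 := fun h => hks (by
      rwa [show z = k.succ from Fin.ext (by simpa [Fin.val_succ] using h)] at hz)
    simp only [Finset.mem_Ioo, Finset.mem_Ioi, Fin.lt_def, Fin.val_succ, Fin.val_zero]
    omega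
  have hx' := hmem x (by simp)
  have hy' := hmem y (by simp)
  have hcross : ∀ u v : Fin (m + 1), u ∈ ({x, y} : Finset (Fin (m + 1))) →
      v ∈ ({x, y} : Finset (Fin (m + 1))) →
      u ∈ Finset.Ioo (0 : Fin (m + 1)) k.succ → v ∈ Finset.Ioi k.succ → False := by
    intro u v hu hv huo hvo
    simp only [Finset.mem_Ioo, Finset.mem_Ioi] at huo hvo
    exact hnc ⟨0, u, k.succ, v, huo.1, huo.2, hvo, {0, k.succ}, hk, {x, y}, hB,
      fun h => hne h.symm, by simp, by simp, hu, hv⟩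
  rcases hx' with hx1 | hx2 <;> rcases hy' with hy1 | hy2
  · left; intro z hz
    simp only [Finset.mem_insert, Finset.mem_singleton] at hz
    rcases hz with rfl | rfl <;> assumption
  · exact absurd (hcross x y (by simp) (by simp) hx1 hy2) not_false
  · exact absurd (hcross y x (by simp) (by simp) hy1 hx2) not_false
  · right; intro z hz
    simp only [Finset.mem_insert, Finset.mem_singleton] at hz
    rcases hz with rfl | rfl <;> assumption

lemma filter_pairing {m : ℕ} {P : Finset (Finset (Fin (m + 1)))}
    (hP : IsPairingOn Finset.univ P) (hnc : IsNoncrossing P) {k : Fin m}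
    (hk : ({0, k.succ} : Finset (Fin (m + 1))) ∈ P)
    {S T : Finset (Fin (m + 1))}
    (hS : ∀ B ∈ P, B ≠ {0, k.succ} → B ⊆ S ∨ B ⊆ T)
    (hST : ∀ x ∈ S, x ∉ T)
    (h0S : (0 : Fin (m + 1)) ∉ S) (hkS : k.succ ∉ S) :
    P.filter (fun B => B ⊆ S) ∈ pairingsOn S := by
  obtain ⟨hcard, -, hcov, huniq⟩ := hP
  refine (mem_pairingsOn _ _).mpr ⟨⟨?_, ?_, ?_, ?_⟩, ?_⟩
  · intro B hB; exact hcard B (Finset.mem_filter.mp hB).1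
  · intro B hB; exact (Finset.mem_filter.mp hB).2
  · intro i hi
    obtain ⟨B, hB, hiB⟩ := hcov i (Finset.mem_univ _)
    have hne : B ≠ {0, k.succ} := by
      rintro rfl
      simp only [Finset.mem_insert, Finset.mem_singleton] at hiB
      rcases hiB with rfl | rfl
      · exact h0S hi
      · exact hkS hi
    rcases hS B hB hne with h | h
    · exact ⟨B, Finset.mem_filter.mpr ⟨hB, h⟩, hiB⟩
    · exact absurd hi (fun hi' => hST i hi' (h hiB))
  · intro B hB B' hB' i hiB hiB'
    exact huniq B (Finset.mem_filter.mp hB).1 B' (Finset.mem_filter.mp hB').1 i hiB hiB'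
  · rintro ⟨a, b, c, d, h1, h2, h3, B, hB, B', hB', hne, ha, hc, hb, hd⟩
    exact hnc ⟨a, b, c, d, h1, h2, h3, B, (Finset.mem_filter.mp hB).1, B',
      (Finset.mem_filter.mp hB').1, hne, ha, hc, hb, hd⟩

lemma P_eq_insert {m : ℕ} {P : Finset (Finset (Fin (m + 1)))}
    (hP : IsPairingOn Finset.univ P) (hnc : IsNoncrossing P) {k : Fin m}
    (hk : ({0, k.succ} : Finset (Fin (m + 1))) ∈ P) :
    P = insert {0, k.succ}
      (P.filter (fun B => B ⊆ Finset.Ioo 0 k.succ) ∪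
       P.filter (fun B => B ⊆ Finset.Ioi k.succ)) := by
  ext B
  simp only [Finset.mem_insert, Finset.mem_union, Finset.mem_filter]
  constructor
  · intro hB
    by_cases h : B = {0, k.succ}
    · exact Or.inl h
    · rcases block_in_halves hP hnc hk hB h with h1 | h2
      · exact Or.inr (Or.inl ⟨hB, h1⟩)
      · exact Or.inr (Or.inr ⟨hB, h2⟩)
  · rintro (rfl | ⟨hB, -⟩ | ⟨hB, -⟩) <;> first | exact hk | exact hB

lemma insert_pairing {m : ℕ} {k : Fin m} {P₁ P₂ : Finset (Finset (Fin (m + 1)))}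
    (h1 : IsPairingOn (Finset.Ioo 0 k.succ) P₁) (hnc1 : IsNoncrossing P₁)
    (h2 : IsPairingOn (Finset.Ioi k.succ) P₂) (hnc2 : IsNoncrossing P₂) :
    IsPairingOn Finset.univ (insert {0, k.succ} (P₁ ∪ P₂)) ∧
    IsNoncrossing (insert {0, k.succ} (P₁ ∪ P₂)) := by
  obtain ⟨hcard1, hsub1, hcov1, huniq1⟩ := h1
  obtain ⟨hcard2, hsub2, hcov2, huniq2⟩ := h2
  have hmem : ∀ B : Finset (Fin (m + 1)),
      B ∈ insert {0, k.succ} (P₁ ∪ P₂) ↔ B = {0, k.succ} ∨ B ∈ P₁ ∨ B ∈ P₂ := by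
    intro B; simp [Finset.mem_insert, Finset.mem_union]
  have hIoo : ∀ z : Fin (m + 1), z ∈ Finset.Ioo (0 : Fin (m + 1)) k.succ ↔
      0 < (z : ℕ) ∧ (z : ℕ) < (k : ℕ) + 1 := by
    intro z
    rw [Finset.mem_Ioo]
    simp only [Fin.lt_def, Fin.val_succ, Fin.val_zero]
  have hIoi : ∀ z : Fin (m + 1), z ∈ Finset.Ioi k.succ ↔ (k : ℕ) + 1 < (z : ℕ) := by
    intro z
    rw [Finset.mem_Ioi]
    simp only [Fin.lt_def, Fin.val_succ]
  have hB0 : ∀ z : Fin (m + 1), z ∈ ({0, k.succ} : Finset (Fin (m + 1))) ↔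
      (z : ℕ) = 0 ∨ (z : ℕ) = (k : ℕ) + 1 := by
    intro z
    simp only [Finset.mem_insert, Finset.mem_singleton, Fin.ext_iff, Fin.val_succ, Fin.val_zero]
  constructor
  · refine ⟨?_, fun B _ => Finset.subset_univ B, ?_, ?_⟩
    · intro B hB
      rcases (hmem B).mp hB with rfl | hB | hB
      · exact Finset.card_pair (Fin.succ_ne_zero k).symm
      · exact hcard1 B hB
      · exact hcard2 B hB
    · intro i _
      rcases Nat.lt_trichotomy (i : ℕ) ((k : ℕ) + 1) with h | h | h
      · rcases Nat.eq_zero_or_pos (i : ℕ) with h0 | h0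
        · exact ⟨{0, k.succ}, (hmem _).mpr (Or.inl rfl), by
            simp [hB0 i, h0]⟩
        · obtain ⟨B, hB, hiB⟩ := hcov1 i ((hIoo i).mpr ⟨h0, h⟩)
          exact ⟨B, (hmem _).mpr (Or.inr (Or.inl hB)), hiB⟩
      · exact ⟨{0, k.succ}, (hmem _).mpr (Or.inl rfl), by simp [hB0 i, h]⟩
      · obtain ⟨B, hB, hiB⟩ := hcov2 i ((hIoi i).mpr h)
        exact ⟨B, (hmem _).mpr (Or.inr (Or.inr hB)), hiB⟩
    · intro B hB B' hB' i hiB hiB'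
      rcases (hmem B).mp hB with rfl | h | h <;>
        rcases (hmem B').mp hB' with rfl | h' | h'
      · rfl
      · exfalso
        have := (hIoo i).mp (hsub1 B' h' hiB')
        have := (hB0 i).mp hiB
        omega
      · exfalso
        have := (hIoi i).mp (hsub2 B' h' hiB')
        have := (hB0 i).mp hiB
        omega
      · exfalso
        have := (hIoo i).mp (hsub1 B h hiB)
        have := (hB0 i).mp hiB'
        omega
      · exact huniq1 B h B' h' i hiB hiB'
      · exfalso
        have := (hIoo i).mp (hsub1 B h hiB)
        have := (hIoi i).mp (hsub2 B' h' hiB')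
        omega
      · exfalso
        have := (hIoi i).mp (hsub2 B h hiB)
        have := (hB0 i).mp hiB'
        omega
      · exfalso
        have := (hIoi i).mp (hsub2 B h hiB)
        have := (hIoo i).mp (hsub1 B' h' hiB')
        omega
      · exact huniq2 B h B' h' i hiB hiB'
  · rintro ⟨a, b, c, d, h12, h23, h34, B, hB, B', hB', hne, ha, hc, hb, hd⟩
    have hval : ∀ {u v : Fin (m + 1)}, u < v → (u : ℕ) < (v : ℕ) := fun h => h
    rcases (hmem B).mp hB with rfl | h | h <;>
      rcases (hmem B').mp hB' with rfl | h' | h'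
    · exact hne rfl
    · -- B = {0,k.succ}, B' ∈ P₁ : a,c ∈ {0,k.succ}, b,d ∈ Ioo
      have hda := (hB0 a).mp ha
      have hdc := (hB0 c).mp hc
      have hdb := (hIoo b).mp (hsub1 B' h' hb)
      have hdd := (hIoo d).mp (hsub1 B' h' hd)
      have h1 := hval h12; have h2 := hval h23; have h3 := hval h34
      omega
    · have hda := (hB0 a).mp ha
      have hdc := (hB0 c).mp hc
      have hdb := (hIoi b).mp (hsub2 B' h' hb)
      have hdd := (hIoi d).mp (hsub2 B' h' hd)
      have h1 := hval h12; have h2 := hval h23; have h3 := hval h34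
      omega
    · have hda := (hIoo a).mp (hsub1 B h ha)
      have hdc := (hIoo c).mp (hsub1 B h hc)
      have hdb := (hB0 b).mp hb
      have hdd := (hB0 d).mp hd
      have h1 := hval h12; have h2 := hval h23; have h3 := hval h34
      omega
    · exact hnc1 ⟨a, b, c, d, h12, h23, h34, B, h, B', h', hne, ha, hc, hb, hd⟩
    · have hdc := (hIoo c).mp (hsub1 B h hc)
      have hdb := (hIoi b).mp (hsub2 B' h' hb)
      have h2 := hval h23
      omega
    · have hda := (hIoi a).mp (hsub2 B h ha)
      have hdb := (hB0 b).mp hb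
      have hdd := (hB0 d).mp hd
      have h1 := hval h12
      omega
    · have hda := (hIoi a).mp (hsub2 B h ha)
      have hdb := (hIoo b).mp (hsub1 B' h' hb)
      have h1 := hval h12
      omega
    · exact hnc2 ⟨a, b, c, d, h12, h23, h34, B, h, B', h', hne, ha, hc, hb, hd⟩

lemma filter_insert_eq {m : ℕ} {k : Fin m} {P₁ P₂ : Finset (Finset (Fin (m + 1)))}
    (h1 : IsPairingOn (Finset.Ioo 0 k.succ) P₁)
    (h2 : IsPairingOn (Finset.Ioi k.succ) P₂) :
    (insert {0, k.succ} (P₁ ∪ P₂)).filter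
        (fun B => B ⊆ Finset.Ioo 0 k.succ) = P₁ ∧
    (insert {0, k.succ} (P₁ ∪ P₂)).filter
        (fun B => B ⊆ Finset.Ioi k.succ) = P₂ := by
  obtain ⟨hcard1, hsub1, -, -⟩ := h1
  obtain ⟨hcard2, hsub2, -, -⟩ := h2
  have h0Ioo : (0 : Fin (m + 1)) ∉ Finset.Ioo (0 : Fin (m + 1)) k.succ := by simp
  have h0Ioi : (0 : Fin (m + 1)) ∉ Finset.Ioi k.succ := by
    rw [Finset.mem_Ioi]
    simp [Fin.lt_def]
  have hdisj : ∀ z : Fin (m + 1), z ∈ Finset.Ioo (0 : Fin (m + 1)) k.succ →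
      z ∈ Finset.Ioi k.succ → False := by
    intro z hz1 hz2
    simp only [Finset.mem_Ioo, Finset.mem_Ioi] at hz1 hz2
    exact absurd (hz1.2.trans hz2) (lt_irrefl z)
  have hne1 : ∀ B ∈ P₁, B.Nonempty := fun B hB =>
    Finset.card_pos.mp (by rw [hcard1 B hB]; norm_num)
  have hne2 : ∀ B ∈ P₂, B.Nonempty := fun B hB =>
    Finset.card_pos.mp (by rw [hcard2 B hB]; norm_num)
  constructor
  · ext B
    simp only [Finset.mem_filter, Finset.mem_insert, Finset.mem_union]
    constructor
    · rintro ⟨rfl | hB | hB, hsub⟩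
      · exact absurd (hsub (by simp)) h0Ioo
      · exact hB
      · obtain ⟨x, hx⟩ := hne2 B hB
        exact absurd (hsub hx) (fun h => hdisj x h (hsub2 B hB hx))
    · intro hB
      exact ⟨Or.inr (Or.inl hB), hsub1 B hB⟩
  · ext B
    simp only [Finset.mem_filter, Finset.mem_insert, Finset.mem_union]
    constructor
    · rintro ⟨rfl | hB | hB, hsub⟩
      · exact absurd (hsub (by simp)) h0Ioi
      · obtain ⟨x, hx⟩ := hne1 B hB
        exact absurd (hsub1 B hB hx) (fun h => hdisj x h (hsub hx))
      · exact hB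
    · intro hB
      exact ⟨Or.inr (Or.inr hB), hsub2 B hB⟩

lemma BV_pair {m : ℕ} (f : Fin (m + 1) → ε) (k : Fin m) :
    BV inv σ f ({0, k.succ} : Finset (Fin (m + 1))) =
      if f k.succ = inv (f 0) then σ (f 0) else 0 := by
  have hne : ({0, k.succ} : Finset (Fin (m + 1))).Nonempty := ⟨0, by simp⟩
  have hmin : ({0, k.succ} : Finset (Fin (m + 1))).min' hne = 0 := by
    apply le_antisymm (Finset.min'_le _ _ (by simp)) (Fin.zero_le _)
  have hmax : ({0, k.succ} : Finset (Fin (m + 1))).max' hne = k.succ := by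
    have h1 := Finset.le_max' ({0, k.succ} : Finset (Fin (m + 1))) k.succ (by simp)
    have h2 := Finset.max'_mem ({0, k.succ} : Finset (Fin (m + 1))) hne
    simp only [Finset.mem_insert, Finset.mem_singleton] at h2
    rcases h2 with h2 | h2
    · exfalso
      rw [h2] at h1
      exact (Fin.succ_ne_zero k) (le_antisymm (Fin.zero_le _) h1 ▸ rfl)
    · exact h2
  rw [BV, dif_pos hne, hmin, hmax]

lemma decomp {m : ℕ} (f : Fin (m + 1) → ε) :
    F inv σ f Finset.univ =
      ∑ k : Fin m,
        (if f k.succ = inv (f 0) then σ (f 0) else 0)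
          * F inv σ f (Finset.Ioo 0 k.succ) * F inv σ f (Finset.Ioi k.succ) := by
  rcases Nat.eq_zero_or_pos m with rfl | hm
  · have hempty : pairingsOn (Finset.univ : Finset (Fin 1)) = ∅ := by
      rw [Finset.eq_empty_iff_forall_notMem]
      intro P hP
      obtain ⟨⟨hcard, hsub, hcov, -⟩, -⟩ := (mem_pairingsOn _ _).mp hP
      obtain ⟨B, hB, -⟩ := hcov 0 (Finset.mem_univ _)
      have h2 := hcard B hB
      have hle := Finset.card_le_card (hsub B hB)
      simp [Finset.card_univ] at hle
      omega
    rw [F, hempty]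
    simp
  · have key : ∀ P ∈ pairingsOn (Finset.univ : Finset (Fin (m + 1))),
        ({0, (kOf hm P).succ} : Finset (Fin (m + 1))) ∈ P := by
      intro P hP
      obtain ⟨hPp, -⟩ := (mem_pairingsOn _ _).mp hP
      obtain ⟨k, hk⟩ := exists_zero_block hPp
      rw [kOf_spec hm hPp.2.2.2 hk]
      exact hk
    have hST1 : ∀ (k : Fin m) (x : Fin (m + 1)),
        x ∈ Finset.Ioo (0 : Fin (m + 1)) k.succ → x ∉ Finset.Ioi k.succ := by
      intro k x hx1 hx2
      rw [Finset.mem_Ioo] at hx1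
      rw [Finset.mem_Ioi] at hx2
      exact absurd (hx1.2.trans hx2) (lt_irrefl x)
    have hST2 : ∀ (k : Fin m) (x : Fin (m + 1)),
        x ∈ Finset.Ioi k.succ → x ∉ Finset.Ioo (0 : Fin (m + 1)) k.succ :=
      fun k x hx2 hx1 => hST1 k x hx1 hx2
    have h0S1 : ∀ k : Fin m, (0 : Fin (m + 1)) ∉ Finset.Ioo (0 : Fin (m + 1)) k.succ := by
      intro k; simp
    have h0S2 : ∀ k : Fin m, (0 : Fin (m + 1)) ∉ Finset.Ioi k.succ := by
      intro k; rw [Finset.mem_Ioi]; simp [Fin.lt_def]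
    have hkS1 : ∀ k : Fin m, k.succ ∉ Finset.Ioo (0 : Fin (m + 1)) k.succ := by
      intro k; rw [Finset.mem_Ioo]; simp
    have hkS2 : ∀ k : Fin m, k.succ ∉ Finset.Ioi k.succ := by
      intro k; rw [Finset.mem_Ioi]; simp
    have step2 : ∀ k : Fin m,
        (if f k.succ = inv (f 0) then σ (f 0) else 0)
          * F inv σ f (Finset.Ioo 0 k.succ) * F inv σ f (Finset.Ioi k.succ)
        = ∑ p ∈ pairingsOn (Finset.Ioo (0 : Fin (m + 1)) k.succ) ×ˢ
              pairingsOn (Finset.Ioi k.succ),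
            (if f k.succ = inv (f 0) then σ (f 0) else 0) *
              ((∏ B ∈ p.1, BV inv σ f B) * (∏ B ∈ p.2, BV inv σ f B)) := by
      intro k
      rw [F, F, mul_assoc, Finset.sum_mul_sum, Finset.mul_sum, Finset.sum_product]
      exact Finset.sum_congr rfl fun P₁ _ => by rw [Finset.mul_sum]
    calc F inv σ f Finset.univ
        = ∑ x ∈ (Finset.univ : Finset (Fin m)).sigma
            (fun k => pairingsOn (Finset.Ioo (0 : Fin (m + 1)) k.succ) ×ˢ
              pairingsOn (Finset.Ioi k.succ)),
            (if f x.1.succ = inv (f 0) then σ (f 0) else 0) *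
              ((∏ B ∈ x.2.1, BV inv σ f B) * (∏ B ∈ x.2.2, BV inv σ f B)) := ?_
      _ = _ := by
          rw [Finset.sum_sigma]
          exact Finset.sum_congr rfl fun k _ => (step2 k).symm
    rw [F]
    refine Finset.sum_nbij'
      (i := fun P => ⟨kOf hm P,
        (P.filter (fun B => B ⊆ Finset.Ioo (0 : Fin (m + 1)) (kOf hm P).succ),
         P.filter (fun B => B ⊆ Finset.Ioi (kOf hm P).succ))⟩)
      (j := fun x => insert {0, x.1.succ} (x.2.1 ∪ x.2.2)) ?_ ?_ ?_ ?_ ?_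
    · -- forward membership
      intro P hP
      obtain ⟨hPp, hnc⟩ := (mem_pairingsOn _ _).mp hP
      have hk := key P hP
      simp only [Finset.mem_sigma, Finset.mem_univ, Finset.mem_product, true_and]
      exact ⟨filter_pairing hPp hnc hk
          (fun B hB hne => block_in_halves hPp hnc hk hB hne)
          (hST1 _) (h0S1 _) (hkS1 _),
        filter_pairing hPp hnc hk
          (fun B hB hne => (block_in_halves hPp hnc hk hB hne).symm)
          (hST2 _) (h0S2 _) (hkS2 _)⟩
    · -- backward membership
      rintro ⟨k, P₁, P₂⟩ hx
      simp only [Finset.mem_sigma, Finset.mem_univ, Finset.mem_product, true_and] at hx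
      obtain ⟨h1, h2⟩ := hx
      obtain ⟨h1p, h1nc⟩ := (mem_pairingsOn _ _).mp h1
      obtain ⟨h2p, h2nc⟩ := (mem_pairingsOn _ _).mp h2
      obtain ⟨hp, hnc⟩ := insert_pairing h1p h1nc h2p h2nc
      exact (mem_pairingsOn _ _).mpr ⟨hp, hnc⟩
    · -- left inverse
      intro P hP
      obtain ⟨hPp, hnc⟩ := (mem_pairingsOn _ _).mp hP
      have hk := key P hP
      exact (P_eq_insert hPp hnc hk).symm
    · -- right inverse
      rintro ⟨k, P₁, P₂⟩ hx
      simp only [Finset.mem_sigma, Finset.mem_univ, Finset.mem_product, true_and] at hx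
      obtain ⟨h1, h2⟩ := hx
      obtain ⟨h1p, h1nc⟩ := (mem_pairingsOn _ _).mp h1
      obtain ⟨h2p, h2nc⟩ := (mem_pairingsOn _ _).mp h2
      obtain ⟨hp, -⟩ := insert_pairing h1p h1nc h2p h2nc
      have hkof : kOf hm (insert {0, k.succ} (P₁ ∪ P₂)) = k :=
        kOf_spec hm hp.2.2.2 (Finset.mem_insert_self _ _)
      obtain ⟨hf1, hf2⟩ := filter_insert_eq h1p h2p
      dsimp only
      rw [hkof, hf1, hf2]
    · -- values
      intro P hP
      obtain ⟨hPp, hnc⟩ := (mem_pairingsOn _ _).mp hP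
      have hk := key P hP
      have hcard := hPp.1
      have hb0 : ({0, (kOf hm P).succ} : Finset (Fin (m + 1))) ∉
          P.filter (fun B => B ⊆ Finset.Ioo (0 : Fin (m + 1)) (kOf hm P).succ) ∪
          P.filter (fun B => B ⊆ Finset.Ioi (kOf hm P).succ) := by
        intro hmem
        rcases Finset.mem_union.mp hmem with h | h
        · exact h0S1 _ ((Finset.mem_filter.mp h).2 (by simp))
        · exact h0S2 _ ((Finset.mem_filter.mp h).2 (by simp))
      have hdisj : Disjoint
          (P.filter (fun B => B ⊆ Finset.Ioo (0 : Fin (m + 1)) (kOf hm P).succ))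
          (P.filter (fun B => B ⊆ Finset.Ioi (kOf hm P).succ)) := by
        rw [Finset.disjoint_left]
        intro B hB1 hB2
        obtain ⟨hBP, hs1⟩ := Finset.mem_filter.mp hB1
        obtain ⟨-, hs2⟩ := Finset.mem_filter.mp hB2
        obtain ⟨x, hx⟩ := Finset.card_pos.mp (by rw [hcard B hBP]; norm_num)
        exact hST1 _ x (hs1 hx) (hs2 hx)
      dsimp only
      calc ∏ B ∈ P, BV inv σ f B
          = ∏ B ∈ insert {0, (kOf hm P).succ}
              (P.filter (fun B => B ⊆ Finset.Ioo (0 : Fin (m + 1)) (kOf hm P).succ) ∪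
               P.filter (fun B => B ⊆ Finset.Ioi (kOf hm P).succ)), BV inv σ f B := by
            rw [← P_eq_insert hPp hnc hk]
        _ = BV inv σ f {0, (kOf hm P).succ} *
              ((∏ B ∈ P.filter
                  (fun B => B ⊆ Finset.Ioo (0 : Fin (m + 1)) (kOf hm P).succ), BV inv σ f B) *
               (∏ B ∈ P.filter (fun B => B ⊆ Finset.Ioi (kOf hm P).succ), BV inv σ f B)) := by
            rw [Finset.prod_insert hb0, Finset.prod_union hdisj]
        _ = _ := by rw [BV_pair]

lemma ncPairings_zero : ncPairings 0 = {∅} := by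
  ext P
  simp only [ncPairings, Finset.mem_filter, Finset.mem_univ, true_and, Finset.mem_singleton]
  constructor
  · rintro ⟨⟨hcard, -, -⟩, -⟩
    refine Finset.eq_empty_iff_forall_notMem.mpr fun B hB => ?_
    have h2 := hcard B hB
    have hB0 : B = ∅ := Finset.eq_empty_of_isEmpty B
    rw [hB0] at h2
    simp at h2
  · rintro rfl
    refine ⟨⟨by simp, fun i => i.elim0, by simp⟩, ?_⟩
    rintro ⟨a, -⟩
    exact a.elim0

lemma phi_nil : phi inv σ ([] : List ε) = 1 := by
  have h : ncPairings ([] : List ε).length = {∅} := ncPairings_zero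
  rw [phi, h]
  simp

lemma take_part (e : ε) (w : List ε) (k : Fin w.length) :
    phi inv σ (w.take (k : ℕ)) =
      F inv σ (fun i : Fin (w.length + 1) => (e :: w).get i) (Finset.Ioo 0 k.succ) := by
  have ha : (w.take (k : ℕ)).length = (k : ℕ) := by
    have := k.isLt
    rw [List.length_take]
    omega
  have hlt : ∀ i : Fin (w.take (k : ℕ)).length, (i : ℕ) + 1 < w.length + 1 := by
    intro i
    have h1 := i.isLt
    have h2 := k.isLt
    omega
  have hg : StrictMono (fun i : Fin (w.take (k : ℕ)).length =>
      (⟨(i : ℕ) + 1, hlt i⟩ : Fin (w.length + 1))) := by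
    intro i j hij
    simp only [Fin.lt_def]
    exact Nat.add_lt_add_right hij 1
  have hfg : ∀ i : Fin (w.take (k : ℕ)).length,
      (w.take (k : ℕ)).get i = (e :: w).get ⟨(i : ℕ) + 1, hlt i⟩ := by
    intro i
    simp [List.get_eq_getElem]
  have himg : Finset.image (fun i : Fin (w.take (k : ℕ)).length =>
      (⟨(i : ℕ) + 1, hlt i⟩ : Fin (w.length + 1))) Finset.univ
      = Finset.Ioo (0 : Fin (w.length + 1)) k.succ := by
    ext x
    simp only [Finset.mem_image, Finset.mem_univ, true_and, Finset.mem_Ioo,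
      Fin.lt_def, Fin.val_zero, Fin.val_succ, Fin.ext_iff]
    constructor
    · rintro ⟨i, hi⟩
      have h1 := i.isLt
      omega
    · intro hx
      refine ⟨⟨(x : ℕ) - 1, by omega⟩, by simp; omega⟩
  rw [phi_eq_F, transport inv σ _ _ hg _ hfg, himg]

lemma drop_part (e : ε) (w : List ε) (k : Fin w.length) :
    phi inv σ (w.drop ((k : ℕ) + 1)) =
      F inv σ (fun i : Fin (w.length + 1) => (e :: w).get i) (Finset.Ioi k.succ) := by
  have ha : (w.drop ((k : ℕ) + 1)).length = w.length - ((k : ℕ) + 1) := by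
    simp [List.length_drop]
  have hlt : ∀ i : Fin (w.drop ((k : ℕ) + 1)).length,
      (i : ℕ) + (k : ℕ) + 2 < w.length + 1 := by
    intro i
    have h1 := i.isLt
    have h2 := k.isLt
    omega
  have hg : StrictMono (fun i : Fin (w.drop ((k : ℕ) + 1)).length =>
      (⟨(i : ℕ) + (k : ℕ) + 2, hlt i⟩ : Fin (w.length + 1))) := by
    intro i j hij
    simpa only [Fin.lt_def] using Nat.add_lt_add_right (Nat.add_lt_add_right hij (k : ℕ)) 2
  have hfg : ∀ i : Fin (w.drop ((k : ℕ) + 1)).length,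
      (w.drop ((k : ℕ) + 1)).get i = (e :: w).get ⟨(i : ℕ) + (k : ℕ) + 2, hlt i⟩ := by
    intro i
    have h1 := i.isLt
    simp only [List.get_eq_getElem]
    simp only [List.getElem_drop, List.getElem_cons_succ]
    congr 1
    omega
  have himg : Finset.image (fun i : Fin (w.drop ((k : ℕ) + 1)).length =>
      (⟨(i : ℕ) + (k : ℕ) + 2, hlt i⟩ : Fin (w.length + 1))) Finset.univ
      = Finset.Ioi k.succ := by
    ext x
    simp only [Finset.mem_image, Finset.mem_univ, true_and, Finset.mem_Ioi,
      Fin.lt_def, Fin.val_succ, Fin.ext_iff]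
    constructor
    · rintro ⟨i, hi⟩
      omega
    · intro hx
      have hxlt := x.isLt
      refine ⟨⟨(x : ℕ) - ((k : ℕ) + 2), by omega⟩, by simp; omega⟩
  rw [phi_eq_F, transport inv σ _ _ hg _ hfg, himg]

lemma phi_rec (e : ε) (w : List ε) :
    phi inv σ (e :: w) =
      ∑ k : Fin w.length,
        (if w.get k = inv e then σ e else 0) *
          phi inv σ (w.take (k : ℕ)) * phi inv σ (w.drop ((k : ℕ) + 1)) := by
  rw [phi_eq_F]
  refine Eq.trans (decomp inv σ (fun i : Fin (w.length + 1) => (e :: w).get i)) ?_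
  refine Finset.sum_congr rfl fun k _ => ?_
  rw [take_part inv σ e w k, drop_part inv σ e w k]
  have h1 : (e :: w).get k.succ = w.get k := by
    simp [List.get_eq_getElem, Fin.val_succ]
  have h2 : (e :: w).get (0 : Fin (w.length + 1)) = e := rfl
  rw [h1, h2]

end PhiAux

/-- The function `φ` satisfies `φ([]) = 1` and the paper's recursion
`φ(e :: w) = Σ_{w = w₁ ++ f :: w₂} δ_{f = inv e} σ(e) φ(w₁) φ(w₂)`, and it is
the unique function on words with these properties. -/
theorem phi_recursion_and_unique {ε : Type*} (inv : ε → ε) (σ : ε → ℝ) :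
    phi inv σ ([] : List ε) = 1 ∧
    (∀ (e : ε) (w : List ε),
      phi inv σ (e :: w) =
        ∑ k : Fin w.length,
          (if w.get k = inv e then σ e else 0) *
            phi inv σ (w.take (k : ℕ)) * phi inv σ (w.drop ((k : ℕ) + 1))) ∧
    (∀ ψ : List ε → ℝ, ψ [] = 1 →
      (∀ (e : ε) (w : List ε),
        ψ (e :: w) =
          ∑ k : Fin w.length,
            (if w.get k = inv e then σ e else 0) *
              ψ (w.take (k : ℕ)) * ψ (w.drop ((k : ℕ) + 1))) →
      ψ = phi inv σ) := by
  refine ⟨PhiAux.phi_nil inv σ, PhiAux.phi_rec inv σ, ?_⟩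
  intro ψ hnil hrec
  suffices h : ∀ n (w : List ε), w.length ≤ n → ψ w = phi inv σ w by
    funext w; exact h w.length w le_rfl
  intro n
  induction n with
  | zero =>
    intro w hw
    obtain rfl : w = [] := List.eq_nil_of_length_eq_zero (Nat.le_zero.mp hw)
    rw [hnil, PhiAux.phi_nil]
  | succ n ih =>
    intro w hw
    match w with
    | [] => rw [hnil, PhiAux.phi_nil]
    | e :: w =>
      have hwn : w.length ≤ n := by simpa using hw
      rw [hrec, PhiAux.phi_rec]
      refine Finset.sum_congr rfl fun k _ => ?_
      rw [ih (w.take (k : ℕ)) (by simp [List.length_take]; omega),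
        ih (w.drop ((k : ℕ) + 1)) (by simp [List.length_drop]; omega)]
end

section
/- Let X be a type. For a list w = [x₀, …, x_{m−1}] over X define τ(w) = the number of noncrossing perfect pairings π of Fin m such that every block {i, j} of π satisfies x_i = x_j (so τ(w) = 0 when m is odd and τ([]) = 1). Then τ is invariant under cyclic rotation of the word: for every x : X and every list w, τ(x :: w) = τ(w ++ [x]). (This is the free-probability instance of the paper's Lemma that Tr_k is a trace on Gr_kP, which follows from the invariance of the set of Temperley–Lieb diagrams under rotation; τ is Voiculescu's trace on noncommutative monomials in self-adjoint free semicircular variables.) -/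
open scoped Classical

/-- Voiculescu's trace of a monomial: the number of noncrossing perfect
pairings of the positions of `w` all of whose blocks pair equal letters. -/
noncomputable def tau {X : Type*} (w : List X) : ℕ :=
  ((ncPairings w.length).filter fun P =>
    ∀ B ∈ P, ∀ i ∈ B, ∀ j ∈ B, w.get i = w.get j).card

/-- Rotation `0 ↦ n`, `i ↦ i - 1`. -/
def rotEquiv (n : ℕ) : Fin (n + 1) ≃ Fin (n + 1) where
  toFun i := ⟨if i.val = 0 then n else i.val - 1, by have := i.isLt; split <;> omega⟩
  invFun j := ⟨if j.val = n then 0 else j.val + 1, by have := j.isLt; split <;> omega⟩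
  left_inv i := by
    have := i.isLt
    apply Fin.ext
    by_cases h : i.val = 0 <;> simp [h] <;> split_ifs <;> omega
  right_inv j := by
    have := j.isLt
    apply Fin.ext
    by_cases h : j.val = n <;> simp [h] <;> split_ifs <;> omega

lemma isPairing_image {m m' : ℕ} (e : Fin m ≃ Fin m') {P : Finset (Finset (Fin m))}
    (hP : IsPairing P) : IsPairing (P.image fun B => B.image e) := by
  obtain ⟨h2, hcov, hdisj⟩ := hP
  refine ⟨?_, ?_, ?_⟩
  · intro B hB
    obtain ⟨B0, hB0, rfl⟩ := Finset.mem_image.1 hB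
    rw [Finset.card_image_of_injective _ e.injective]
    exact h2 _ hB0
  · intro i
    obtain ⟨B, hB, hi⟩ := hcov (e.symm i)
    refine ⟨B.image e, Finset.mem_image_of_mem _ hB, ?_⟩
    simpa using Finset.mem_image_of_mem e hi
  · intro B hB B' hB' i hiB hiB'
    obtain ⟨B0, hB0, rfl⟩ := Finset.mem_image.1 hB
    obtain ⟨B1, hB1, rfl⟩ := Finset.mem_image.1 hB'
    obtain ⟨j, hj, rfl⟩ := Finset.mem_image.1 hiB
    obtain ⟨k, hk, hek⟩ := Finset.mem_image.1 hiB'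
    have hkj : k = j := e.injective hek
    rw [hdisj _ hB0 _ hB1 j hj (hkj ▸ hk)]

lemma isNoncrossing_of_image {m m' : ℕ} (e : Fin m ≃ Fin m')
    (hrot : ∀ a b c d : Fin m, a < b → b < c → c < d →
      (e a < e b ∧ e b < e c ∧ e c < e d) ∨
      (e b < e c ∧ e c < e d ∧ e d < e a) ∨
      (e c < e d ∧ e d < e a ∧ e a < e b) ∨
      (e d < e a ∧ e a < e b ∧ e b < e c))
    {P : Finset (Finset (Fin m))}
    (h : IsNoncrossing (P.image fun B => B.image e)) : IsNoncrossing P := by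
  rintro ⟨a, b, c, d, hab, hbc, hcd, B, hB, B', hB', hne, haB, hcB, hbB', hdB'⟩
  apply h
  have hne' : (B.image fun i => e i) ≠ B'.image fun i => e i := fun h' =>
    hne (Finset.image_injective e.injective h')
  have hBm : (B.image fun i => e i) ∈ P.image fun B => B.image e :=
    Finset.mem_image_of_mem _ hB
  have hB'm : (B'.image fun i => e i) ∈ P.image fun B => B.image e :=
    Finset.mem_image_of_mem _ hB'
  have ha := Finset.mem_image_of_mem e haB
  have hb := Finset.mem_image_of_mem e hbB'
  have hc := Finset.mem_image_of_mem e hcB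
  have hd := Finset.mem_image_of_mem e hdB'
  rcases hrot a b c d hab hbc hcd with ⟨h1, h2, h3⟩ | ⟨h1, h2, h3⟩ | ⟨h1, h2, h3⟩ | ⟨h1, h2, h3⟩
  · exact ⟨e a, e b, e c, e d, h1, h2, h3, _, hBm, _, hB'm, hne', ha, hc, hb, hd⟩
  · exact ⟨e b, e c, e d, e a, h1, h2, h3, _, hB'm, _, hBm, hne'.symm, hb, hd, hc, ha⟩
  · exact ⟨e c, e d, e a, e b, h1, h2, h3, _, hBm, _, hB'm, hne', hc, ha, hd, hb⟩
  · exact ⟨e d, e a, e b, e c, h1, h2, h3, _, hB'm, _, hBm, hne'.symm, hd, hb, ha, hc⟩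

/-- The trace `τ` is invariant under cyclic rotation of words
(the free-probability instance of the paper's lemma that `Tr_k` is a trace). -/
theorem tau_cyclic {X : Type*} (x : X) (w : List X) :
    tau (x :: w) = tau (w ++ [x]) := by
  classical
  have hlen : (w ++ [x]).length = w.length + 1 := by simp
  set n := w.length with hn
  let E : Fin ((x :: w).length) ≃ Fin ((w ++ [x]).length) :=
    (rotEquiv n).trans (finCongr hlen.symm)
  have hEval : ∀ i : Fin ((x :: w).length),
      (E i).val = if i.val = 0 then n else i.val - 1 := by
    intro i
    simp [E, rotEquiv, finCongr]
  have hEsymmval : ∀ j : Fin ((w ++ [x]).length),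
      (E.symm j).val = if j.val = n then 0 else j.val + 1 := by
    intro j
    simp [E, rotEquiv, finCongr]
  have hrotE : ∀ a b c d : Fin ((x :: w).length), a < b → b < c → c < d →
      (E a < E b ∧ E b < E c ∧ E c < E d) ∨
      (E b < E c ∧ E c < E d ∧ E d < E a) ∨
      (E c < E d ∧ E d < E a ∧ E a < E b) ∨
      (E d < E a ∧ E a < E b ∧ E b < E c) := by
    intro a b c d hab hbc hcd
    have hd : d.val < n + 1 := d.isLt
    simp only [Fin.lt_def, hEval] at *
    split_ifs <;> omega
  have hrotEs : ∀ a b c d : Fin ((w ++ [x]).length), a < b → b < c → c < d →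
      (E.symm a < E.symm b ∧ E.symm b < E.symm c ∧ E.symm c < E.symm d) ∨
      (E.symm b < E.symm c ∧ E.symm c < E.symm d ∧ E.symm d < E.symm a) ∨
      (E.symm c < E.symm d ∧ E.symm d < E.symm a ∧ E.symm a < E.symm b) ∨
      (E.symm d < E.symm a ∧ E.symm a < E.symm b ∧ E.symm b < E.symm c) := by
    intro a b c d hab hbc hcd
    have hd : d.val < n + 1 := hlen ▸ d.isLt
    simp only [Fin.lt_def, hEsymmval] at *
    split_ifs <;> omega
  have hget : ∀ i : Fin ((x :: w).length), (w ++ [x]).get (E i) = (x :: w).get i := by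
    intro i
    rcases i with ⟨iv, hiv⟩
    simp only [List.get_eq_getElem]
    rcases Nat.eq_zero_or_pos iv with h0 | hpos
    · subst h0
      have hE : (E (⟨0, hiv⟩ : Fin ((x :: w).length))).val = n := by
        rw [hEval]; simp
      simp only [hE]
      rw [List.getElem_concat_length (l := w) (a := x) (i := n) hn]
      simp
    · have hE : (E (⟨iv, hiv⟩ : Fin ((x :: w).length))).val = iv - 1 := by
        rw [hEval]; have : iv ≠ 0 := by omega
        simp [this]
      simp only [hE]
      have hlt : iv - 1 < w.length := by
        have : iv < n + 1 := hiv
        omega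
      rw [List.getElem_append_left hlt]
      obtain ⟨k, rfl⟩ : ∃ k, iv = k + 1 := ⟨iv - 1, by omega⟩
      simp
  have himg1 : ∀ P : Finset (Finset (Fin ((x :: w).length))),
      ((P.image fun B => B.image E).image fun B => B.image E.symm) = P := by
    intro P
    rw [Finset.image_image]
    have hid : ((fun B => Finset.image (⇑E.symm) B) ∘ fun B => Finset.image (⇑E) B) = id := by
      funext B
      simp [Finset.image_image]
    rw [hid, Finset.image_id]
  have himg2 : ∀ Q : Finset (Finset (Fin ((w ++ [x]).length))),
      ((Q.image fun B => B.image E.symm).image fun B => B.image E) = Q := by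
    intro Q
    rw [Finset.image_image]
    have hid : ((fun B => Finset.image (⇑E) B) ∘ fun B => Finset.image (⇑E.symm) B) = id := by
      funext B
      simp [Finset.image_image]
    rw [hid, Finset.image_id]
  unfold tau
  refine Finset.card_bij' (fun P _ => P.image fun B => B.image E)
    (fun Q _ => Q.image fun B => B.image E.symm) ?_ ?_ ?_ ?_
  · intro P hP
    simp only [ncPairings, Finset.mem_filter, Finset.mem_univ, true_and] at hP ⊢
    obtain ⟨⟨hpair, hnc⟩, hlet⟩ := hP
    refine ⟨⟨isPairing_image E hpair, ?_⟩, ?_⟩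
    · apply isNoncrossing_of_image E.symm hrotEs
      rwa [himg1]
    · intro B hB i hi j hj
      obtain ⟨B0, hB0, rfl⟩ := Finset.mem_image.1 hB
      obtain ⟨i0, hi0, rfl⟩ := Finset.mem_image.1 hi
      obtain ⟨j0, hj0, rfl⟩ := Finset.mem_image.1 hj
      rw [show (w ++ [x]).get (E i0) = (x :: w).get i0 from hget i0,
        show (w ++ [x]).get (E j0) = (x :: w).get j0 from hget j0]
      exact hlet B0 hB0 i0 hi0 j0 hj0
  · intro Q hQ
    simp only [ncPairings, Finset.mem_filter, Finset.mem_univ, true_and] at hQ ⊢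
    obtain ⟨⟨hpair, hnc⟩, hlet⟩ := hQ
    refine ⟨⟨isPairing_image E.symm hpair, ?_⟩, ?_⟩
    · apply isNoncrossing_of_image E hrotE
      rwa [himg2]
    · intro B hB i hi j hj
      obtain ⟨B0, hB0, rfl⟩ := Finset.mem_image.1 hB
      obtain ⟨i0, hi0, rfl⟩ := Finset.mem_image.1 hi
      obtain ⟨j0, hj0, rfl⟩ := Finset.mem_image.1 hj
      have h1 : (x :: w).get (E.symm i0) = (w ++ [x]).get i0 := by
        have := hget (E.symm i0)
        rw [Equiv.apply_symm_apply] at this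
        exact this.symm
      have h2 : (x :: w).get (E.symm j0) = (w ++ [x]).get j0 := by
        have := hget (E.symm j0)
        rw [Equiv.apply_symm_apply] at this
        exact this.symm
      rw [h1, h2]
      exact hlet B0 hB0 i0 hi0 j0 hj0
  · intro P _
    exact himg1 P
  · intro Q _
    exact himg2 Q
end

section
/- Let X be a type and let τ be defined on lists over X by: τ(w) = the number of noncrossing perfect pairings π of the positions Fin (w.length) such that every block {i, j} of π pairs positions carrying equal letters of w. Then for every m : ℕ, every family of pairwise distinct lists w : Fin m → List X, and every c : Fin m → ℂ, the sum Σ_{p,q} (conj (c p)) · (c q) · τ((w p).reverse ++ (w q)) is a nonnegative real number, and it equals 0 only if c = 0. (This is the free-probability instance of the paper's result that the trace Tr₀ is positive and faithful — part (i) of the Main Theorem — realized by the vacuum state on the full Fock space.) -/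
open scoped Classical ComplexOrder

namespace TauProof
variable {X : Type*}

/-- head-matching helper -/
noncomputable def Fhd (x : X) (f : List X → ℕ) : List X → ℕ
  | [] => 0
  | y :: t => if y = x then f t else 0

/-- Fock-space coefficient: number of stack runs on `u` ending with stack `z`. -/
noncomputable def F : List X → List X → ℕ
  | [], [] => 1
  | [], _ :: _ => 0
  | x :: u, z => Fhd x (F u) z + F u (x :: z)

lemma F_nil_nil : F ([] : List X) [] = 1 := by simp [F]
lemma F_nil_cons (y : X) (t : List X) : F ([] : List X) (y :: t) = 0 := by simp [F]
lemma F_cons (x : X) (u z : List X) : F (x :: u) z = Fhd x (F u) z + F u (x :: z) := by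
  cases z <;> simp [F]

lemma Fhd_cons (x : X) (f : List X → ℕ) (y : X) (t : List X) :
    Fhd x f (y :: t) = if y = x then f t else 0 := rfl

lemma Fhd_cons_self (x : X) (f : List X → ℕ) (t : List X) : Fhd x f (x :: t) = f t := by
  simp [Fhd]

lemma Fhd_ne_zero {x : X} {f : List X → ℕ} {z : List X} (h : Fhd x f z ≠ 0) :
    ∃ t, z = x :: t ∧ f t ≠ 0 := by
  cases z with
  | nil => simp [Fhd] at h
  | cons y t =>
    by_cases hyx : y = x
    · subst hyx; rw [Fhd_cons_self] at h; exact ⟨t, rfl, h⟩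
    · rw [Fhd_cons, if_neg hyx] at h; simp at h

lemma sublist_of_F_ne_zero : ∀ u z : List X, F u z ≠ 0 → z.Sublist u := by
  intro u
  induction u with
  | nil =>
    intro z h
    cases z with
    | nil => exact List.Sublist.refl _
    | cons y t => rw [F_nil_cons] at h; simp at h
  | cons x u ih =>
    intro z h
    rw [F_cons] at h
    rcases Nat.eq_zero_or_pos (F u (x :: z)) with h2 | h2
    · rw [h2, Nat.add_zero] at h
      obtain ⟨t, rfl, hft⟩ := Fhd_ne_zero h
      exact List.Sublist.cons₂ x (ih t hft)
    · have : (x :: z).Sublist u := ih _ (Nat.pos_iff_ne_zero.mp h2)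
      exact ((List.sublist_cons_self x z).trans this).trans (List.sublist_cons_self x u)

lemma F_self (w : List X) : F w w = 1 := by
  induction w with
  | nil => exact F_nil_nil
  | cons x u ih =>
    rw [F_cons, Fhd_cons_self, ih]
    have : F u (x :: x :: u) = 0 := by
      by_contra h
      have := (sublist_of_F_ne_zero _ _ h).length_le
      simp at this
    omega

lemma F_eq_zero_of_long {u z : List X} (h : u.length ≤ z.length) (hne : z ≠ u) :
    F u z = 0 := by
  by_contra hF
  exact hne ((sublist_of_F_ne_zero _ _ hF).eq_of_length_le h)

/-- sums of a function over two finsets both containing its support agree. -/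
lemma sum_ext [DecidableEq (List X)] (f : List X → ℕ)
    (S T : Finset (List X)) (hS : ∀ z, f z ≠ 0 → z ∈ S) (hT : ∀ z, f z ≠ 0 → z ∈ T) :
    ∑ z ∈ S, f z = ∑ z ∈ T, f z := by
  calc ∑ z ∈ S, f z = ∑ z ∈ S ∪ T, f z :=
        Finset.sum_subset Finset.subset_union_left
          (fun z _ hz => by by_contra hc; exact hz (hS z hc))
    _ = ∑ z ∈ T, f z :=
        (Finset.sum_subset Finset.subset_union_right
          (fun z _ hz => by by_contra hc; exact hz (hT z hc))).symm

lemma F_pair : ∀ u v : List X,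
    F (u.reverse ++ v) [] = ∑ z ∈ u.sublists.toFinset, F u z * F v z := by
  intro u
  induction u with
  | nil =>
    intro v
    simp [F_self, F_nil_nil, F_nil_cons]
  | cons x u ih =>
    intro v
    have hLHS : (x :: u).reverse ++ v = u.reverse ++ (x :: v) := by simp
    rw [hLHS, ih (x :: v)]
    have hmemT' : ∀ z : List X, z ∈ u.sublists.toFinset ↔ z.Sublist u := by
      intro z; rw [List.mem_toFinset, List.mem_sublists]
    have hmemT : ∀ z : List X, z ∈ (x :: u).sublists.toFinset ↔ z.Sublist (x :: u) := by
      intro z; rw [List.mem_toFinset, List.mem_sublists]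
    have expand2 : ∀ z ∈ u.sublists.toFinset, F u z * F (x :: v) z
        = F u z * Fhd x (F v) z + F u z * F v (x :: z) := by
      intro z _; rw [F_cons, Nat.mul_add]
    have expand : ∀ z ∈ (x :: u).sublists.toFinset, F (x :: u) z * F v z
        = Fhd x (F u) z * F v z + F u (x :: z) * F v z := by
      intro z _; rw [F_cons, Nat.add_mul]
    rw [Finset.sum_congr rfl expand2, Finset.sum_add_distrib,
        Finset.sum_congr rfl expand, Finset.sum_add_distrib]
    rw [Nat.add_comm (∑ z ∈ u.sublists.toFinset, F u z * Fhd x (F v) z)]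
    congr 1
    · -- Claim1: Σ_{z∈T} Fhd x (F u) z * F v z = Σ_{z∈T'} F u z * F v (x::z)
      rw [sum_ext (fun z => Fhd x (F u) z * F v z)
          ((x :: u).sublists.toFinset) (u.sublists.toFinset.image (fun t => x :: t))
          ?_ ?_]
      · rw [Finset.sum_image (fun a _ b _ h => by injection h)]
        apply Finset.sum_congr rfl
        intro t _
        rw [Fhd_cons_self]
      · intro z hz
        have h1 : Fhd x (F u) z ≠ 0 := fun hc => hz (by simp [hc])
        obtain ⟨t, rfl, hft⟩ := Fhd_ne_zero h1
        exact (hmemT _).2 (List.Sublist.cons₂ x (sublist_of_F_ne_zero _ _ hft))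
      · intro z hz
        have h1 : Fhd x (F u) z ≠ 0 := fun hc => hz (by simp [hc])
        obtain ⟨t, rfl, hft⟩ := Fhd_ne_zero h1
        exact Finset.mem_image.2 ⟨t, (hmemT' _).2 (sublist_of_F_ne_zero _ _ hft), rfl⟩
    · -- Claim2: Σ_{z∈T} F u (x::z) * F v z = Σ_{z∈T'} F u z * Fhd x (F v) z
      rw [sum_ext (fun z => F u (x :: z) * F v z)
          ((x :: u).sublists.toFinset) (u.sublists.toFinset) ?_ ?_]
      · symm
        rw [sum_ext (fun z => F u z * Fhd x (F v) z)
            (u.sublists.toFinset) (u.sublists.toFinset.image (fun t => x :: t)) ?_ ?_]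
        · rw [Finset.sum_image (fun a _ b _ h => by injection h)]
          apply Finset.sum_congr rfl
          intro t _
          rw [Fhd_cons_self]
        · intro z hz
          have h1 : F u z ≠ 0 := fun hc => hz (by simp [hc])
          exact (hmemT' z).2 (sublist_of_F_ne_zero _ _ h1)
        · intro z hz
          have h2 : Fhd x (F v) z ≠ 0 := fun hc => hz (by simp [hc])
          obtain ⟨t, rfl, _⟩ := Fhd_ne_zero h2
          have h1 : F u (x :: t) ≠ 0 := fun hc => hz (by simp [hc])
          have := sublist_of_F_ne_zero _ _ h1
          exact Finset.mem_image.2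
            ⟨t, (hmemT' t).2 ((List.sublist_cons_self x t).trans this), rfl⟩
      · intro z hz
        have h1 : F u (x :: z) ≠ 0 := fun hc => hz (by simp [hc])
        have := sublist_of_F_ne_zero _ _ h1
        exact (hmemT z).2
          (((List.sublist_cons_self x z).trans this).trans (List.sublist_cons_self x u))
      · intro z hz
        have h1 : F u (x :: z) ≠ 0 := fun hc => hz (by simp [hc])
        exact (hmemT' z).2 ((List.sublist_cons_self x z).trans (sublist_of_F_ne_zero _ _ h1))


/-- The set of positions matched by the partial pairing `P`. -/
def Matched {n : ℕ} (P : Finset (Finset (Fin n))) (i : Fin n) : Prop := ∃ B ∈ P, i ∈ B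

/-- The (sorted) list of unmatched positions. -/
noncomputable def UW {n : ℕ} (P : Finset (Finset (Fin n))) : List (Fin n) :=
  (List.finRange n).filter (fun i => decide (¬ Matched P i))

lemma mem_UW {n : ℕ} (P : Finset (Finset (Fin n))) (i : Fin n) :
    i ∈ UW P ↔ ¬ Matched P i := by
  simp [UW, List.mem_filter]

lemma UW_sorted {n : ℕ} (P : Finset (Finset (Fin n))) : (UW P).Pairwise (· < ·) :=
  (List.pairwise_lt_finRange n).sublist List.filter_sublist

lemma sorted_list_eq {n : ℕ} (l₁ l₂ : List (Fin n)) (h₁ : l₁.Pairwise (· < ·))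
    (h₂ : l₂.Pairwise (· < ·)) (h : ∀ i, i ∈ l₁ ↔ i ∈ l₂) : l₁ = l₂ :=
  List.Perm.eq_of_pairwise (fun _ _ _ _ hab hba => absurd (hab.trans hba) (lt_irrefl _)) h₁ h₂
    ((List.perm_ext_iff_of_nodup (h₁.imp ne_of_lt) (h₂.imp ne_of_lt)).2 h)

/-- A noncrossing partial pairing of the positions of `w`, with matched pairs
carrying equal letters, no unmatched position under an arc, and unmatched
positions spelling `z`. -/
def Good (w : List X) (P : Finset (Finset (Fin w.length))) (z : List X) : Prop :=
  (∀ B ∈ P, B.card = 2) ∧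
  (∀ B ∈ P, ∀ B' ∈ P, ∀ i, i ∈ B → i ∈ B' → B = B') ∧
  IsNoncrossing P ∧
  (∀ B ∈ P, ∀ i ∈ B, ∀ j ∈ B, w.get i = w.get j) ∧
  (∀ B ∈ P, ∀ a ∈ B, ∀ b ∈ B, ∀ i, a < i → i < b → Matched P i) ∧
  (UW P).map w.get = z

noncomputable def N (w z : List X) : ℕ := (Finset.univ.filter fun P => Good w P z).card

lemma tau_eq_N (w : List X) : tau w = N w [] := by
  unfold tau ncPairings N
  rw [Finset.filter_filter]
  congr 1
  apply Finset.filter_congr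
  intro P _
  constructor
  · rintro ⟨⟨⟨h2, htot, hdisj⟩, hnc⟩, hlet⟩
    refine ⟨h2, hdisj, hnc, hlet, fun B _ a _ b _ i _ _ => htot i, ?_⟩
    have : UW P = [] := by
      rw [List.eq_nil_iff_forall_not_mem]
      intro i hi
      exact (mem_UW P i).1 hi (htot i)
    rw [this]; rfl
  · rintro ⟨h2, hdisj, hnc, hlet, _, hword⟩
    have htot : ∀ i, Matched P i := by
      intro i
      by_contra hi
      have : i ∈ UW P := (mem_UW P i).2 hi
      rw [List.map_eq_nil_iff] at hword
      rw [hword] at this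
      exact List.not_mem_nil this
    exact ⟨⟨⟨h2, htot, hdisj⟩, hnc⟩, hlet⟩

lemma N_nil (z : List X) : N ([] : List X) z = if z = [] then 1 else 0 := by
  have hg : ∀ P : Finset (Finset (Fin (List.length ([] : List X)))),
      Good [] P z ↔ P = ∅ ∧ z = [] := by
    intro P
    constructor
    · rintro ⟨h2, -, -, -, -, hword⟩
      have hP : P = ∅ := by
        rw [Finset.eq_empty_iff_forall_notMem]
        intro B hB
        have := h2 B hB
        have hne : B.Nonempty := Finset.card_pos.1 (by omega)
        exact (hne.choose : Fin 0).elim0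
      refine ⟨hP, ?_⟩
      rw [← hword]
      have : UW P = [] := by
        rw [List.eq_nil_iff_forall_not_mem]; exact fun i _ => i.elim0
      rw [this]; rfl
    · rintro ⟨rfl, rfl⟩
      refine ⟨by simp, by simp, ?_, by simp, by simp, ?_⟩
      · rintro ⟨a, -⟩; exact a.elim0
      · have : UW (∅ : Finset (Finset (Fin (List.length ([] : List X))))) = [] := by
          rw [List.eq_nil_iff_forall_not_mem]; exact fun i _ => i.elim0
        rw [this]; rfl
  unfold N
  split
  · rename_i hz
    subst hz
    have : (Finset.univ.filter fun P => Good ([] : List X) P []) = {∅} := by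
      ext P
      simp only [Finset.mem_filter, Finset.mem_univ, true_and, Finset.mem_singleton]
      rw [hg P]; simp
    rw [this]; rfl
  · rename_i hz
    have : (Finset.univ.filter fun P => Good ([] : List X) P z) = ∅ := by
      ext P
      simp only [Finset.mem_filter, Finset.mem_univ, true_and, Finset.notMem_empty, iff_false]
      rw [hg P]
      rintro ⟨-, rfl⟩; exact hz rfl
    rw [this]; rfl

section Shift
variable (x : X) (u : List X)

/-- Shift a pairing on `Fin n` to one on `Fin (n+1)` avoiding position `0`. -/
noncomputable def up (Q : Finset (Finset (Fin u.length))) :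
    Finset (Finset (Fin (u.length + 1))) :=
  Q.image (fun B => B.image Fin.succ)

lemma up_injective : Function.Injective (up (u := u)) :=
  Finset.image_injective (Finset.image_injective (Fin.succ_injective _))

lemma matched_up_succ (Q : Finset (Finset (Fin u.length))) (j : Fin u.length) :
    Matched (up u Q) j.succ ↔ Matched Q j := by
  constructor
  · rintro ⟨B, hB, hj⟩
    obtain ⟨C, hC, rfl⟩ := Finset.mem_image.1 hB
    obtain ⟨i, hi, hij⟩ := Finset.mem_image.1 hj
    have : i = j := Fin.succ_injective _ hij
    subst this
    exact ⟨C, hC, hi⟩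
  · rintro ⟨C, hC, hj⟩
    exact ⟨C.image Fin.succ, Finset.mem_image_of_mem _ hC, Finset.mem_image_of_mem _ hj⟩

lemma matched_up_zero (Q : Finset (Finset (Fin u.length))) : ¬ Matched (up u Q) 0 := by
  rintro ⟨B, hB, h0⟩
  obtain ⟨C, _, rfl⟩ := Finset.mem_image.1 hB
  obtain ⟨i, _, hi0⟩ := Finset.mem_image.1 h0
  exact Fin.succ_ne_zero i hi0

lemma UW_cons_zero (P : Finset (Finset (Fin (u.length + 1))))
    (Q : Finset (Finset (Fin u.length))) (h0 : ¬ Matched P 0)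
    (h : ∀ j : Fin u.length, Matched P j.succ ↔ Matched Q j) :
    UW P = 0 :: (UW Q).map Fin.succ := by
  unfold UW
  rw [List.finRange_succ]
  rw [List.filter_cons_of_pos (by simpa using h0)]
  congr 1
  rw [List.filter_map]
  congr 1
  apply List.filter_congr
  intro j _
  simp only [Function.comp]
  apply decide_eq_decide.2
  exact not_congr (h j)

lemma good_up (Q : Finset (Finset (Fin u.length))) (t : List X) (hQ : Good u Q t) :
    Good (x :: u) (up u Q) (x :: t) := by
  obtain ⟨h2, hdisj, hnc, hlet, hcov, hword⟩ := hQ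
  refine ⟨?_, ?_, ?_, ?_, ?_, ?_⟩
  · intro B hB
    obtain ⟨C, hC, rfl⟩ := Finset.mem_image.1 hB
    rw [Finset.card_image_of_injective C (Fin.succ_injective _)]
    exact h2 C hC
  · intro B hB B' hB' i hiB hiB'
    obtain ⟨C, hC, rfl⟩ := Finset.mem_image.1 hB
    obtain ⟨C', hC', rfl⟩ := Finset.mem_image.1 hB'
    obtain ⟨j, hj, rfl⟩ := Finset.mem_image.1 hiB
    obtain ⟨j', hj', hj'e⟩ := Finset.mem_image.1 hiB'
    have hj2 : j ∈ C' := by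
      have hjj : j' = j := Fin.succ_injective _ hj'e
      rwa [hjj] at hj'
    rw [hdisj C hC C' hC' j hj hj2]
  · rintro ⟨a, b, c, d, hab, hbc, hcd, B, hB, B', hB', hne, ha, hc, hb, hd⟩
    obtain ⟨C, hC, rfl⟩ := Finset.mem_image.1 hB
    obtain ⟨C', hC', rfl⟩ := Finset.mem_image.1 hB'
    obtain ⟨a0, ha0, rfl⟩ := Finset.mem_image.1 ha
    obtain ⟨c0, hc0, rfl⟩ := Finset.mem_image.1 hc
    obtain ⟨b0, hb0, rfl⟩ := Finset.mem_image.1 hb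
    obtain ⟨d0, hd0, rfl⟩ := Finset.mem_image.1 hd
    exact hnc ⟨a0, b0, c0, d0, Fin.succ_lt_succ_iff.1 hab, Fin.succ_lt_succ_iff.1 hbc,
      Fin.succ_lt_succ_iff.1 hcd, C, hC, C', hC',
      fun h => hne (by rw [h]), ha0, hc0, hb0, hd0⟩
  · intro B hB i hi j hj
    obtain ⟨C, hC, rfl⟩ := Finset.mem_image.1 hB
    obtain ⟨i0, hi0, rfl⟩ := Finset.mem_image.1 hi
    obtain ⟨j0, hj0, rfl⟩ := Finset.mem_image.1 hj
    rw [show ((x :: u).get i0.succ) = u.get i0 from List.get_cons_succ,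
        show ((x :: u).get j0.succ) = u.get j0 from List.get_cons_succ]
    exact hlet C hC i0 hi0 j0 hj0
  · intro B hB a ha b hb i hai hib
    obtain ⟨C, hC, rfl⟩ := Finset.mem_image.1 hB
    obtain ⟨a0, ha0, rfl⟩ := Finset.mem_image.1 ha
    obtain ⟨b0, hb0, rfl⟩ := Finset.mem_image.1 hb
    have hine : i ≠ (0 : Fin (u.length + 1)) := by
      intro h; rw [h] at hai; exact Fin.not_lt_zero _ hai
    obtain ⟨i0, rfl⟩ := Fin.exists_succ_eq.2 hine
    rw [matched_up_succ]
    exact hcov C hC a0 ha0 b0 hb0 i0 (Fin.succ_lt_succ_iff.1 hai) (Fin.succ_lt_succ_iff.1 hib)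
  · show ((UW (up u Q)).map (x :: u).get) = x :: t
    rw [UW_cons_zero u (up u Q) Q (matched_up_zero u Q) (matched_up_succ u Q)]
    rw [List.map_cons, List.map_map]
    have hpt : ∀ i ∈ UW Q, ((x :: u).get ∘ Fin.succ) i = u.get i := fun i _ => List.get_cons_succ
    rw [List.map_congr_left hpt, hword, List.get_cons_zero]

lemma good_down (P : Finset (Finset (Fin (u.length + 1)))) (z : List X)
    (hP : Good (x :: u) P z) (h0 : ¬ Matched P 0) :
    ∃ Q t, z = x :: t ∧ Good u Q t ∧ up u Q = P := by
  obtain ⟨h2, hdisj, hnc, hlet, hcov, hword⟩ := hP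
  have hnot0 : ∀ B ∈ P, (0 : Fin (u.length + 1)) ∉ B := fun B hB h => h0 ⟨B, hB, h⟩
  set Q : Finset (Finset (Fin u.length)) :=
    P.image (fun B => B.preimage Fin.succ (Fin.succ_injective _).injOn) with hQdef
  have himg : ∀ B ∈ P, (B.preimage Fin.succ (Fin.succ_injective _).injOn).image Fin.succ = B := by
    intro B hB
    ext j
    simp only [Finset.mem_image, Finset.mem_preimage]
    constructor
    · rintro ⟨i, hi, rfl⟩; exact hi
    · intro hj
      have hjne : j ≠ 0 := fun h => hnot0 B hB (h ▸ hj)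
      obtain ⟨i, rfl⟩ := Fin.exists_succ_eq.2 hjne
      exact ⟨i, hj, rfl⟩
  have hup : up u Q = P := by
    rw [hQdef]
    unfold up
    rw [Finset.image_image]
    apply Finset.image_congr (g := id) ?_ |>.trans (Finset.image_id)
    intro B hB
    exact himg B hB
  have hmatch : ∀ j : Fin u.length, Matched P j.succ ↔ Matched Q j := by
    intro j
    rw [← hup, matched_up_succ]
  have hUW : UW P = 0 :: (UW Q).map Fin.succ := UW_cons_zero u P Q h0 hmatch
  refine ⟨Q, (UW Q).map u.get, ?_, ?_, hup⟩
  · rw [← hword, hUW, List.map_cons, List.map_map]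
    have hpt : ∀ i ∈ UW Q, ((x :: u).get ∘ Fin.succ) i = u.get i := fun i _ => List.get_cons_succ
    rw [List.map_congr_left hpt, List.get_cons_zero]
  · have hmemQ : ∀ C ∈ Q, ∃ B ∈ P, C = B.preimage Fin.succ (Fin.succ_injective _).injOn := by
      intro C hC
      obtain ⟨B, hB, rfl⟩ := Finset.mem_image.1 hC
      exact ⟨B, hB, rfl⟩
    refine ⟨?_, ?_, ?_, ?_, ?_, rfl⟩
    · intro C hC
      obtain ⟨B, hB, rfl⟩ := hmemQ C hC
      have hic := himg B hB
      have hcc := Finset.card_image_of_injective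
        (B.preimage Fin.succ (Fin.succ_injective _).injOn) (Fin.succ_injective _)
      rw [hic] at hcc
      rw [← hcc]
      exact h2 B hB
    · intro C hC C' hC' j hj hj'
      obtain ⟨B, hB, rfl⟩ := hmemQ C hC
      obtain ⟨B', hB', rfl⟩ := hmemQ C' hC'
      have : B = B' := hdisj B hB B' hB' j.succ (Finset.mem_preimage.1 hj) (Finset.mem_preimage.1 hj')
      subst this; rfl
    · rintro ⟨a, b, c, d, hab, hbc, hcd, C, hC, C', hC', hne, ha, hc, hb, hd⟩
      obtain ⟨B, hB, rfl⟩ := hmemQ C hC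
      obtain ⟨B', hB', rfl⟩ := hmemQ C' hC'
      refine hnc ⟨a.succ, b.succ, c.succ, d.succ, Fin.succ_lt_succ_iff.2 hab,
        Fin.succ_lt_succ_iff.2 hbc, Fin.succ_lt_succ_iff.2 hcd, B, hB, B', hB', ?_,
        Finset.mem_preimage.1 ha, Finset.mem_preimage.1 hc,
        Finset.mem_preimage.1 hb, Finset.mem_preimage.1 hd⟩
      intro h; subst h; exact hne rfl
    · intro C hC i hi j hj
      obtain ⟨B, hB, rfl⟩ := hmemQ C hC
      have := hlet B hB i.succ (Finset.mem_preimage.1 hi) j.succ (Finset.mem_preimage.1 hj)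
      rwa [show ((x :: u).get i.succ) = u.get i from List.get_cons_succ,
        show ((x :: u).get j.succ) = u.get j from List.get_cons_succ] at this
    · intro C hC a ha b hb i hai hib
      obtain ⟨B, hB, rfl⟩ := hmemQ C hC
      have := hcov B hB a.succ (Finset.mem_preimage.1 ha) b.succ (Finset.mem_preimage.1 hb)
        i.succ (Fin.succ_lt_succ_iff.2 hai) (Fin.succ_lt_succ_iff.2 hib)
      exact (hmatch i).1 this

end Shift

section EraseInsert
variable (x : X) (u : List X)

lemma nc_subset {n : ℕ} {P' P : Finset (Finset (Fin n))} (h : P' ⊆ P)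
    (hnc : IsNoncrossing P) : IsNoncrossing P' := by
  rintro ⟨a, b, c, d, hab, hbc, hcd, B, hB, B', hB', hne, ha, hc, hb, hd⟩
  exact hnc ⟨a, b, c, d, hab, hbc, hcd, B, h hB, B', h hB', hne, ha, hc, hb, hd⟩

lemma erase_good (P : Finset (Finset (Fin (u.length + 1)))) (z : List X)
    (hG : Good (x :: u) P z) (hM : Matched P 0) :
    ∃ k : Fin (u.length + 1),
      P = insert {0, k} (P.filter (fun B => (0 : Fin (u.length + 1)) ∉ B)) ∧
      Good (x :: u) (P.filter (fun B => (0 : Fin (u.length + 1)) ∉ B)) (x :: x :: z) ∧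
      ¬ Matched (P.filter (fun B => (0 : Fin (u.length + 1)) ∉ B)) 0 ∧
      UW (P.filter (fun B => (0 : Fin (u.length + 1)) ∉ B)) = 0 :: k :: UW P := by
  obtain ⟨B₀, hB₀, h0B⟩ := hM
  obtain ⟨h2', hdisj', hnc', hlet', hcov', hword'⟩ := hG
  have hnc : IsNoncrossing P := hnc'
  have h2 : ∀ B ∈ P, B.card = 2 := h2'
  have hdisj : ∀ B ∈ P, ∀ B' ∈ P, ∀ i : Fin (u.length + 1), i ∈ B → i ∈ B' → B = B' := hdisj'
  have hlet : ∀ B ∈ P, ∀ i ∈ B, ∀ j ∈ B, (x :: u).get i = (x :: u).get j := hlet'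
  have hcov : ∀ B ∈ P, ∀ a ∈ B, ∀ b ∈ B, ∀ i : Fin (u.length + 1), a < i → i < b →
      Matched P i := hcov'
  have hword : (UW P).map (x :: u).get = z := hword'
  -- find k with B₀ = {0, k}
  obtain ⟨a, b, hab, hB0ab⟩ := Finset.card_eq_two.1 (h2 B₀ hB₀)
  have hgetk : ∃ k : Fin (u.length + 1), k ≠ 0 ∧ B₀ = {0, k} := by
    have h0ab : (0 : Fin (u.length + 1)) ∈ ({a, b} : Finset (Fin (u.length + 1))) := by
      rw [← hB0ab]; exact h0B
    rcases Finset.mem_insert.1 h0ab with h0a | h0b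
    · refine ⟨b, fun h => hab (by rw [← h0a, h]), by rw [hB0ab, ← h0a]⟩
    · rw [Finset.mem_singleton] at h0b
      refine ⟨a, fun h => hab (h.trans h0b), ?_⟩
      rw [hB0ab, ← h0b]
      exact Finset.pair_comm a 0
  obtain ⟨k, hk0, hB0⟩ := hgetk
  have hsub : P.filter (fun B => (0 : Fin (u.length + 1)) ∉ B) ⊆ P := Finset.filter_subset _ _
  have hmem' : ∀ B, B ∈ P.filter (fun B => (0 : Fin (u.length + 1)) ∉ B) ↔
      B ∈ P ∧ (0 : Fin (u.length + 1)) ∉ B := by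
    intro B; rw [Finset.mem_filter]
  have hkpair : k ∈ ({0, k} : Finset (Fin (u.length + 1))) :=
    Finset.mem_insert_of_mem (Finset.mem_singleton_self _)
  have hkB0 : k ∈ B₀ := by rw [hB0]; exact hkpair
  have hM0 : Matched P 0 := ⟨B₀, hB₀, h0B⟩
  have hMk : Matched P k := ⟨B₀, hB₀, hkB0⟩
  have hMP' : ∀ i, Matched (P.filter (fun B => (0 : Fin (u.length + 1)) ∉ B)) i ↔
      (Matched P i ∧ i ≠ 0 ∧ i ≠ k) := by
    intro i
    constructor
    · rintro ⟨B, hB', hi⟩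
      obtain ⟨hB, h0nB⟩ := (hmem' B).1 hB'
      refine ⟨⟨B, hB, hi⟩, ?_, ?_⟩
      · rintro rfl; exact h0nB hi
      · intro hik'
        rw [hik'] at hi
        have hBB : B = B₀ := hdisj B hB B₀ hB₀ k hi hkB0
        rw [hBB] at h0nB; exact h0nB h0B
    · rintro ⟨⟨B, hB, hi⟩, hi0, hik⟩
      refine ⟨B, (hmem' B).2 ⟨hB, ?_⟩, hi⟩
      intro h0nB
      have : B = B₀ := hdisj B hB B₀ hB₀ 0 h0nB h0B
      rw [this, hB0] at hi
      rcases Finset.mem_insert.1 hi with h | h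
      · exact hi0 h
      · exact hik (Finset.mem_singleton.1 h)
  have hnM'0 : ¬ Matched (P.filter (fun B => (0 : Fin (u.length + 1)) ∉ B)) 0 :=
    fun h => ((hMP' 0).1 h).2.1 rfl
  have hint : ∀ i : Fin (u.length + 1), 0 < i → i < k → Matched P i := by
    intro i h1 h2
    exact hcov B₀ hB₀ 0 h0B k hkB0 i h1 h2
  have hklt : ∀ i, ¬ Matched P i → k < i := by
    intro i hi
    rcases lt_trichotomy i k with h | h | h
    · exfalso
      have hi0 : i ≠ 0 := fun h' => hi (h' ▸ hM0)
      exact hi (hint i (Fin.pos_iff_ne_zero.2 hi0) h)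
    · exact absurd (h ▸ hMk) hi
    · exact h
  have h0k : (0 : Fin (u.length + 1)) < k := Fin.pos_iff_ne_zero.2 hk0
  have hUW' : UW (P.filter (fun B => (0 : Fin (u.length + 1)) ∉ B)) = 0 :: k :: UW P := by
    apply sorted_list_eq _ _ (UW_sorted _)
    · rw [List.pairwise_cons]
      constructor
      · intro j hj
        rcases List.mem_cons.1 hj with rfl | hj'
        · exact h0k
        · exact h0k.trans (hklt j ((mem_UW P j).1 hj'))
      · rw [List.pairwise_cons]
        exact ⟨fun j hj => hklt j ((mem_UW P j).1 hj), UW_sorted P⟩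
    · intro i
      rw [mem_UW, hMP', List.mem_cons, List.mem_cons, mem_UW]
      by_cases hi0 : i = 0
      · simp [hi0]
      · by_cases hik : i = k
        · simp [hik]
        · constructor
          · intro h
            right; right
            by_contra hm
            exact h ⟨hm, hi0, hik⟩
          · rintro (h | h | h)
            · exact absurd h hi0
            · exact absurd h hik
            · exact fun hc => h hc.1
  refine ⟨k, ?_, ⟨?_, ?_, ?_, ?_, ?_, ?_⟩, hnM'0, hUW'⟩
  · -- P = insert {0,k} P'
    ext B
    rw [Finset.mem_insert, hmem']
    constructor
    · intro hB
      by_cases h0nB : (0 : Fin (u.length + 1)) ∈ B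
      · left; rw [hdisj B hB B₀ hB₀ 0 h0nB h0B, hB0]
      · right; exact ⟨hB, h0nB⟩
    · rintro (rfl | ⟨hB, -⟩)
      · rw [← hB0]; exact hB₀
      · exact hB
  · exact fun B hB => h2 B (hsub hB)
  · exact fun B hB B' hB' i h h' => hdisj B (hsub hB) B' (hsub hB') i h h'
  · exact nc_subset hsub hnc
  · exact fun B hB i hi j hj => hlet B (hsub hB) i hi j hj
  · -- coverage for P'
    intro B hB' a' ha' b' hb' i hai hib
    show Matched (P.filter (fun B => (0 : Fin (u.length + 1)) ∉ B)) i
    have hMi : Matched P i := hcov B (hsub hB') a' ha' b' hb' i hai hib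
    rw [hMP']
    refine ⟨hMi, ?_, ?_⟩
    · intro h; rw [h] at hai; exact Fin.not_lt_zero _ hai
    · intro hik
      obtain ⟨hB, h0nB⟩ := (hmem' B).1 hB'
      have ha0 : a' ≠ (0 : Fin (u.length + 1)) := fun h => h0nB (h ▸ ha')
      rw [hik] at hai hib
      apply hnc
      refine ⟨0, a', k, b', Fin.pos_iff_ne_zero.2 ha0, hai, hib, B₀, hB₀, B, hB, ?_,
        h0B, hkB0, ha', hb'⟩
      intro h; rw [← h] at h0nB; exact h0nB h0B
  · -- word for P'
    show (UW (P.filter (fun B => (0 : Fin (u.length + 1)) ∉ B))).map (x :: u).get = x :: x :: z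
    rw [hUW', List.map_cons, List.map_cons, hword, List.get_cons_zero]
    have hgk : (x :: u).get k = x := by
      have hkg := hlet B₀ hB₀ k hkB0 (0 : Fin (u.length + 1)) h0B
      rw [hkg, List.get_cons_zero]
    rw [hgk]

lemma insert_good (P' : Finset (Finset (Fin (u.length + 1)))) (z : List X)
    (hG : Good (x :: u) P' (x :: x :: z)) (h0 : ¬ Matched P' 0) :
    ∃ k : Fin (u.length + 1),
      Good (x :: u) (insert ({0, k} : Finset (Fin (u.length + 1))) P') z ∧
      Matched (insert ({0, k} : Finset (Fin (u.length + 1))) P') 0 ∧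
      (insert ({0, k} : Finset (Fin (u.length + 1))) P').filter
        (fun B => (0 : Fin (u.length + 1)) ∉ B) = P' := by
  obtain ⟨h2', hdisj', hnc', hlet', hcov', hword'⟩ := hG
  have hnc : IsNoncrossing P' := hnc'
  have h2 : ∀ B ∈ P', B.card = 2 := h2'
  have hdisj : ∀ B ∈ P', ∀ B' ∈ P', ∀ i : Fin (u.length + 1), i ∈ B → i ∈ B' → B = B' := hdisj'
  have hlet : ∀ B ∈ P', ∀ i ∈ B, ∀ j ∈ B, (x :: u).get i = (x :: u).get j := hlet'
  have hcov : ∀ B ∈ P', ∀ a ∈ B, ∀ b ∈ B, ∀ i : Fin (u.length + 1), a < i → i < b →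
      Matched P' i := hcov'
  have hword : (UW P').map (x :: u).get = x :: x :: z := hword'
  obtain ⟨i0, L', hL1⟩ := List.exists_cons_of_ne_nil
    (l := UW P') (by intro h; rw [h] at hword; simp at hword)
  obtain ⟨k, L, hL2⟩ := List.exists_cons_of_ne_nil
    (l := L') (by intro h; rw [h] at hL1; rw [hL1] at hword; simp at hword)
  rw [hL2] at hL1
  have hL : UW P' = i0 :: k :: L := hL1
  clear hL1 hL2
  rw [hL, List.map_cons, List.map_cons] at hword
  have hget0 : (x :: u).get i0 = x := (List.cons.injEq _ _ _ _ ▸ hword).1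
  have hrest := (List.cons.injEq _ _ _ _ ▸ hword).2
  have hgetk : (x :: u).get k = x := (List.cons.injEq _ _ _ _ ▸ hrest).1
  have hmapL : L.map (x :: u).get = z := (List.cons.injEq _ _ _ _ ▸ hrest).2
  -- i0 = 0
  have hs := UW_sorted P'
  rw [hL, List.pairwise_cons] at hs
  obtain ⟨hi0lt, hs2⟩ := hs
  rw [List.pairwise_cons] at hs2
  obtain ⟨hklt, hLp⟩ := hs2
  have hi00 : i0 = 0 := by
    have h0mem : (0 : Fin (u.length + 1)) ∈ UW P' := (mem_UW _ _).2 h0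
    rw [hL] at h0mem
    rcases List.mem_cons.1 h0mem with h | h
    · exact h.symm
    · exact absurd (hi0lt 0 h) (Fin.not_lt_zero _)
  subst hi00
  have h0k : (0 : Fin (u.length + 1)) < k := hi0lt k List.mem_cons_self
  have hk0 : k ≠ 0 := Fin.pos_iff_ne_zero.1 h0k
  have hnMk : ¬ Matched P' k := (mem_UW _ _).1
    (by rw [hL]; exact List.mem_cons_of_mem _ List.mem_cons_self)
  have hnML : ∀ j ∈ L, ¬ Matched P' j := fun j hj =>
    (mem_UW _ _).1 (by rw [hL]; exact List.mem_cons_of_mem _ (List.mem_cons_of_mem _ hj))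
  have h0notin : ∀ B ∈ P', (0 : Fin (u.length + 1)) ∉ B := fun B hB h => h0 ⟨B, hB, h⟩
  have hknotin : ∀ B ∈ P', k ∉ B := fun B hB h => hnMk ⟨B, hB, h⟩
  have hintM : ∀ i : Fin (u.length + 1), 0 < i → i < k → Matched P' i := by
    intro i h1 h2
    by_contra hm
    have hin : i ∈ UW P' := (mem_UW _ _).2 hm
    rw [hL] at hin
    rcases List.mem_cons.1 hin with h | h
    · rw [h] at h1; exact lt_irrefl _ h1
    · rcases List.mem_cons.1 h with h' | h'
      · rw [h'] at h2; exact lt_irrefl _ h2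
      · exact absurd (hklt i h') (not_lt_of_gt h2)
  have hkfree : ∀ B ∈ P', ∀ a ∈ B, ∀ b ∈ B, ¬(a < k ∧ k < b) := by
    rintro B hB a ha b hb ⟨hh1, hh2⟩
    exact hnMk (hcov B hB a ha b hb k hh1 hh2)
  have hmempair : ∀ i : Fin (u.length + 1),
      i ∈ ({0, k} : Finset (Fin (u.length + 1))) ↔ (i = 0 ∨ i = k) := by
    intro i; rw [Finset.mem_insert, Finset.mem_singleton]
  have hmemins : ∀ B, B ∈ insert ({0, k} : Finset (Fin (u.length + 1))) P' ↔
      (B = {0, k} ∨ B ∈ P') := fun B => Finset.mem_insert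
  have hMins : ∀ i, Matched (insert ({0, k} : Finset (Fin (u.length + 1))) P') i ↔
      (i = 0 ∨ i = k ∨ Matched P' i) := by
    intro i
    constructor
    · rintro ⟨B, hB, hi⟩
      rcases (hmemins B).1 hB with rfl | hB'
      · rcases (hmempair i).1 hi with h | h
        · exact Or.inl h
        · exact Or.inr (Or.inl h)
      · exact Or.inr (Or.inr ⟨B, hB', hi⟩)
    · rintro (rfl | hik | ⟨B, hB, hi⟩)
      · exact ⟨{0, k}, Finset.mem_insert_self _ _, (hmempair 0).2 (Or.inl rfl)⟩
      · exact ⟨{0, k}, Finset.mem_insert_self _ _, (hmempair i).2 (Or.inr hik)⟩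
      · exact ⟨B, Finset.mem_insert_of_mem hB, hi⟩
  refine ⟨k, ⟨?_, ?_, ?_, ?_, ?_, ?_⟩, (hMins 0).2 (Or.inl rfl), ?_⟩
  · -- cards
    intro B hB
    rcases (hmemins B).1 hB with rfl | hB'
    · exact Finset.card_pair (fun h => hk0 h.symm)
    · exact h2 B hB'
  · -- disjointness
    intro B hB B' hB' i hiB hiB'
    rcases (hmemins B).1 hB with rfl | hh1 <;> rcases (hmemins B').1 hB' with rfl | hh2
    · rfl
    · exfalso
      rcases (hmempair i).1 hiB with rfl | rfl
      · exact h0notin B' hh2 hiB'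
      · exact hknotin B' hh2 hiB'
    · exfalso
      rcases (hmempair i).1 hiB' with rfl | rfl
      · exact h0notin B hh1 hiB
      · exact hknotin B hh1 hiB
    · exact hdisj B hh1 B' hh2 i hiB hiB'
  · -- noncrossing
    rintro ⟨a, b, c, d, hab, hbc, hcd, B, hB, B', hB', hne, ha, hc, hb, hd⟩
    rcases (hmemins B).1 hB with rfl | hh1 <;> rcases (hmemins B').1 hB' with rfl | hh2
    · exact hne rfl
    · have hac : a = (0 : Fin (u.length + 1)) ∧ c = k := by
        rcases (hmempair a).1 ha with rfl | rfl
        · rcases (hmempair c).1 hc with rfl | rfl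
          · exact absurd (hab.trans hbc) (Fin.not_lt_zero _)
          · exact ⟨rfl, rfl⟩
        · rcases (hmempair c).1 hc with rfl | rfl
          · exact absurd (hab.trans hbc) (Fin.not_lt_zero _)
          · exact absurd (hab.trans hbc) (lt_irrefl _)
      obtain ⟨rfl, rfl⟩ := hac
      exact hkfree B' hh2 b hb d hd ⟨hbc, hcd⟩
    · rcases (hmempair b).1 hb with rfl | rfl
      · exact absurd hab (Fin.not_lt_zero _)
      · rcases (hmempair d).1 hd with rfl | rfl
        · exact absurd (hbc.trans hcd) (Fin.not_lt_zero _)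
        · exact absurd (hbc.trans hcd) (lt_irrefl _)
    · exact hnc ⟨a, b, c, d, hab, hbc, hcd, B, hh1, B', hh2, hne, ha, hc, hb, hd⟩
  · -- letters
    intro B hB i hi j hj
    rcases (hmemins B).1 hB with rfl | hh1
    · have hx : ∀ i' : Fin (u.length + 1),
          i' ∈ ({0, k} : Finset (Fin (u.length + 1))) → (x :: u).get i' = x := by
        intro i' hi'
        rcases (hmempair i').1 hi' with rfl | rfl
        · exact List.get_cons_zero
        · exact hgetk
      rw [hx i hi, hx j hj]
    · exact hlet B hh1 i hi j hj
  · -- coverage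
    intro B hB a ha b hb i hai hib
    show Matched (insert ({0, k} : Finset (Fin (u.length + 1))) P') i
    rcases (hmemins B).1 hB with rfl | hh1
    · have hab' : a = (0 : Fin (u.length + 1)) ∧ b = k := by
        rcases (hmempair a).1 ha with rfl | rfl
        · rcases (hmempair b).1 hb with rfl | rfl
          · exact absurd (hai.trans hib) (Fin.not_lt_zero _)
          · exact ⟨rfl, rfl⟩
        · rcases (hmempair b).1 hb with rfl | rfl
          · exact absurd (hai.trans hib) (Fin.not_lt_zero _)
          · exact absurd (hai.trans hib) (lt_irrefl _)
      obtain ⟨rfl, rfl⟩ := hab'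
      exact (hMins i).2 (Or.inr (Or.inr (hintM i hai hib)))
    · exact (hMins i).2 (Or.inr (Or.inr (hcov B hh1 a ha b hb i hai hib)))
  · -- word
    show (UW (insert ({0, k} : Finset (Fin (u.length + 1))) P')).map (x :: u).get = z
    have hUWins : UW (insert ({0, k} : Finset (Fin (u.length + 1))) P') = L := by
      apply sorted_list_eq _ _ (UW_sorted _) hLp
      intro i
      rw [mem_UW, hMins]
      constructor
      · intro h
        push_neg at h
        obtain ⟨hi0, hik, hm⟩ := h
        have hin : i ∈ UW P' := (mem_UW _ _).2 hm
        rw [hL] at hin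
        rcases List.mem_cons.1 hin with h' | h'
        · exact absurd h' hi0
        · rcases List.mem_cons.1 h' with h'' | h''
          · exact absurd h'' hik
          · exact h''
      · intro hiL
        push_neg
        refine ⟨?_, ?_, hnML i hiL⟩
        · intro h; rw [h] at hiL; exact absurd (hklt _ hiL) (Fin.not_lt_zero _)
        · intro h; rw [h] at hiL; exact absurd (hklt _ hiL) (lt_irrefl _)
    rw [hUWins, hmapL]
  · -- filter recovers P'
    ext B
    rw [Finset.mem_filter, hmemins]
    constructor
    · rintro ⟨rfl | hB', h0nB⟩
      · exact absurd ((hmempair 0).2 (Or.inl rfl)) h0nB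
      · exact hB'
    · intro hB'
      exact ⟨Or.inr hB', h0notin B hB'⟩

end EraseInsert

section Count
variable (x : X) (u : List X)

lemma card_matched (z : List X) :
    (Finset.univ.filter fun P : Finset (Finset (Fin (u.length + 1))) =>
        Good (x :: u) P z ∧ Matched P 0).card =
    (Finset.univ.filter fun P : Finset (Finset (Fin (u.length + 1))) =>
        Good (x :: u) P (x :: x :: z) ∧ ¬ Matched P 0).card := by
  apply Finset.card_bij (fun P _ => P.filter (fun B => (0 : Fin (u.length + 1)) ∉ B))
  · intro P hP
    rw [Finset.mem_filter] at hP ⊢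
    obtain ⟨-, hG, hM⟩ := hP
    obtain ⟨k, hins, hG', hnM, hUW⟩ := erase_good x u P z hG hM
    exact ⟨Finset.mem_univ _, hG', hnM⟩
  · intro P₁ hP₁ P₂ hP₂ heq
    rw [Finset.mem_filter] at hP₁ hP₂
    obtain ⟨k₁, hins₁, -, -, hUW₁⟩ := erase_good x u P₁ z hP₁.2.1 hP₁.2.2
    obtain ⟨k₂, hins₂, -, -, hUW₂⟩ := erase_good x u P₂ z hP₂.2.1 hP₂.2.2
    rw [heq] at hUW₁
    have hlist := hUW₂.symm.trans hUW₁
    injection hlist with h1 h2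
    injection h2 with hk h3
    rw [hins₁, hins₂, heq, hk]
  · intro P' hP'
    rw [Finset.mem_filter] at hP'
    obtain ⟨k, hG, hM, hfil⟩ := insert_good x u P' z hP'.2.1 hP'.2.2
    exact ⟨insert {0, k} P', Finset.mem_filter.2 ⟨Finset.mem_univ _, hG, hM⟩, hfil⟩

lemma card_free (z : List X) :
    (Finset.univ.filter fun P : Finset (Finset (Fin (u.length + 1))) =>
        Good (x :: u) P z ∧ ¬ Matched P 0).card = Fhd x (N u) z := by
  cases z with
  | nil =>
    have h0 : Fhd x (N u) [] = 0 := rfl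
    rw [h0, Finset.card_eq_zero, Finset.filter_eq_empty_iff]
    rintro P - ⟨hG, hM0⟩
    obtain ⟨Q, t, ht, -, -⟩ := good_down x u P [] hG hM0
    cases ht
  | cons y t =>
    by_cases hyx : y = x
    · subst hyx
      rw [Fhd_cons_self]
      have key : (Finset.univ.filter fun Q : Finset (Finset (Fin u.length)) =>
          Good u Q t).card =
          (Finset.univ.filter fun P : Finset (Finset (Fin (u.length + 1))) =>
            Good (y :: u) P (y :: t) ∧ ¬ Matched P 0).card := by
        apply Finset.card_bij (fun Q _ => up u Q)
        · intro Q hQ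
          rw [Finset.mem_filter] at hQ ⊢
          exact ⟨Finset.mem_univ _, good_up y u Q t hQ.2, matched_up_zero u Q⟩
        · intro Q₁ h₁ Q₂ h₂ heq
          exact up_injective u heq
        · intro P hP
          rw [Finset.mem_filter] at hP
          obtain ⟨-, hG, h0⟩ := hP
          obtain ⟨Q, t', ht', hGQ, hup⟩ := good_down y u P (y :: t) hG h0
          have htt : t' = t := ((List.cons.injEq _ _ _ _ ▸ ht') : _ ∧ _).2.symm
          subst htt
          exact ⟨Q, Finset.mem_filter.2 ⟨Finset.mem_univ _, hGQ⟩, hup⟩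
      rw [← key]; rfl
    · rw [Fhd_cons, if_neg hyx, Finset.card_eq_zero, Finset.filter_eq_empty_iff]
      rintro P - ⟨hG, hM0⟩
      obtain ⟨Q, t', ht', -, -⟩ := good_down x u P (y :: t) hG hM0
      exact hyx ((List.cons.injEq _ _ _ _ ▸ ht') : _ ∧ _).1

lemma N_cons (z : List X) : N (x :: u) z = Fhd x (N u) z + N u (x :: z) := by
  have hsplit := Finset.card_filter_add_card_filter_not
    (s := Finset.univ.filter fun P : Finset (Finset (Fin (u.length + 1))) =>
      Good (x :: u) P z)
    (p := fun P => Matched P 0)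
  rw [Finset.filter_filter, Finset.filter_filter] at hsplit
  have h1 : N (x :: u) z = (Finset.univ.filter
      fun P : Finset (Finset (Fin (u.length + 1))) => Good (x :: u) P z).card := rfl
  have h2 : (Finset.univ.filter fun P : Finset (Finset (Fin (u.length + 1))) =>
      Good (x :: u) P z ∧ Matched P 0).card = N u (x :: z) := by
    rw [card_matched x u z, card_free x u (x :: x :: z), Fhd_cons_self]
  have h3 : (Finset.univ.filter fun P : Finset (Finset (Fin (u.length + 1))) =>
      Good (x :: u) P z ∧ ¬ Matched P 0).card = Fhd x (N u) z := card_free x u z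
  rw [h1, ← hsplit, h2, h3]
  exact Nat.add_comm _ _

end Count

lemma N_eq_F : ∀ w z : List X, N w z = F w z := by
  intro w
  induction w with
  | nil =>
    intro z
    rw [N_nil]
    cases z with
    | nil => rw [F_nil_nil]; rfl
    | cons y t => rw [F_nil_cons]; rfl
  | cons x u ih =>
    intro z
    rw [N_cons, F_cons]
    congr 1
    · cases z with
      | nil => rfl
      | cons y t =>
        rw [Fhd_cons, Fhd_cons]
        by_cases hyx : y = x
        · rw [if_pos hyx, if_pos hyx, ih t]
        · rw [if_neg hyx, if_neg hyx]
    · exact ih (x :: z)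

lemma tau_eq_F (w : List X) : tau w = F w [] := by rw [tau_eq_N, N_eq_F]

end TauProof

open TauProof in
theorem aux_tau_positive_faithful {X : Type*} (m : ℕ) (w : Fin m → List X)
    (hw : Function.Injective w) (c : Fin m → ℂ) :
    0 ≤ (∑ p : Fin m, ∑ q : Fin m,
        (starRingEnd ℂ) (c p) * c q * (tau ((w p).reverse ++ w q) : ℂ)) ∧
    ((∑ p : Fin m, ∑ q : Fin m,
        (starRingEnd ℂ) (c p) * c q * (tau ((w p).reverse ++ w q) : ℂ)) = 0 →
      c = 0) := by
  classical
  set Z : Finset (List X) := Finset.univ.biUnion (fun p : Fin m => (w p).sublists.toFinset)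
    with hZdef
  have hZ : ∀ (p : Fin m) (z : List X), F (w p) z ≠ 0 → z ∈ Z := by
    intro p z h
    exact Finset.mem_biUnion.2 ⟨p, Finset.mem_univ _,
      List.mem_toFinset.2 (List.mem_sublists.2 (sublist_of_F_ne_zero _ _ h))⟩
  have htau : ∀ p q : Fin m, (tau ((w p).reverse ++ w q) : ℂ)
      = ∑ z ∈ Z, (F (w p) z : ℂ) * (F (w q) z : ℂ) := by
    intro p q
    rw [tau_eq_F, F_pair]
    rw [sum_ext (fun z => F (w p) z * F (w q) z) ((w p).sublists.toFinset) Z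
      (fun z h => List.mem_toFinset.2 (List.mem_sublists.2 (sublist_of_F_ne_zero _ _
        (fun hc => h (by simp [hc])))))
      (fun z h => hZ p z (fun hc => h (by simp [hc])))]
    push_cast
    rfl
  set g : List X → ℂ := fun z => ∑ p, c p * (F (w p) z : ℂ) with hgdef
  have hgconj : ∀ z, (starRingEnd ℂ) (g z) = ∑ p, (starRingEnd ℂ) (c p) * (F (w p) z : ℂ) := by
    intro z
    rw [hgdef]
    simp only []
    rw [map_sum]
    apply Finset.sum_congr rfl
    intro p _
    rw [map_mul, map_natCast]
  have main : (∑ p : Fin m, ∑ q : Fin m,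
        (starRingEnd ℂ) (c p) * c q * (tau ((w p).reverse ++ w q) : ℂ))
      = ∑ z ∈ Z, ((‖g z‖ ^ 2 : ℝ) : ℂ) := by
    have step1 : (∑ p : Fin m, ∑ q : Fin m,
          (starRingEnd ℂ) (c p) * c q * (tau ((w p).reverse ++ w q) : ℂ))
        = ∑ p : Fin m, ∑ q : Fin m, ∑ z ∈ Z,
            ((starRingEnd ℂ) (c p) * (F (w p) z : ℂ)) * (c q * (F (w q) z : ℂ)) := by
      apply Finset.sum_congr rfl; intro p _
      apply Finset.sum_congr rfl; intro q _
      rw [htau p q, Finset.mul_sum]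
      apply Finset.sum_congr rfl; intro z _
      ring
    have swap1 : ∀ p : Fin m, (∑ q : Fin m, ∑ z ∈ Z,
          ((starRingEnd ℂ) (c p) * (F (w p) z : ℂ)) * (c q * (F (w q) z : ℂ)))
        = ∑ z ∈ Z, ∑ q : Fin m,
          ((starRingEnd ℂ) (c p) * (F (w p) z : ℂ)) * (c q * (F (w q) z : ℂ)) :=
      fun p => Finset.sum_comm
    rw [step1, Finset.sum_congr rfl (fun p _ => swap1 p), Finset.sum_comm]
    apply Finset.sum_congr rfl
    intro z _
    rw [← Finset.sum_mul_sum]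
    rw [← hgconj z]
    have : (∑ q : Fin m, c q * (F (w q) z : ℂ)) = g z := rfl
    rw [this, Complex.conj_mul']
    push_cast
    ring
  constructor
  · rw [main]
    apply Finset.sum_nonneg
    intro z _
    exact Complex.zero_le_real.2 (by positivity)
  · intro h0
    rw [main] at h0
    have hreal : (∑ z ∈ Z, ‖g z‖ ^ 2 : ℝ) = 0 := by
      have : ((∑ z ∈ Z, ‖g z‖ ^ 2 : ℝ) : ℂ) = 0 := by
        rw [Complex.ofReal_sum]
        exact_mod_cast h0
      exact_mod_cast this
    have hzero : ∀ z ∈ Z, g z = 0 := by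
      intro z hz
      have h2 : ‖g z‖ ^ 2 = 0 :=
        (Finset.sum_eq_zero_iff_of_nonneg (fun z _ => by positivity)).1 hreal z hz
      have : ‖g z‖ = 0 := by
        have := sq_eq_zero_iff.1 h2
        exact this
      exact norm_eq_zero.1 this
    by_contra hc
    have hs : (Finset.univ.filter fun p : Fin m => c p ≠ 0).Nonempty := by
      rcases Function.ne_iff.1 hc with ⟨p, hp⟩
      exact ⟨p, Finset.mem_filter.2 ⟨Finset.mem_univ _, hp⟩⟩
    obtain ⟨p₀, hp₀s, hmax⟩ := Finset.exists_max_image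
      (Finset.univ.filter fun p : Fin m => c p ≠ 0) (fun p => (w p).length) hs
    have hp₀ : c p₀ ≠ 0 := (Finset.mem_filter.1 hp₀s).2
    have hzZ : w p₀ ∈ Z := Finset.mem_biUnion.2 ⟨p₀, Finset.mem_univ _,
      List.mem_toFinset.2 (List.mem_sublists.2 (List.Sublist.refl _))⟩
    have hg0 : g (w p₀) = 0 := hzero _ hzZ
    have hgc : g (w p₀) = c p₀ := by
      rw [hgdef]
      simp only []
      rw [Finset.sum_eq_single p₀]
      · rw [F_self, Nat.cast_one, mul_one]
      · intro q _ hq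
        by_cases hcq : c q = 0
        · rw [hcq, zero_mul]
        · have hlen : (w q).length ≤ (w p₀).length :=
            hmax q (Finset.mem_filter.2 ⟨Finset.mem_univ _, hcq⟩)
          have hF : F (w q) (w p₀) = 0 := by
            apply F_eq_zero_of_long hlen
            intro he
            exact hq (hw he).symm
          rw [hF, Nat.cast_zero, mul_zero]
      · intro h; exact absurd (Finset.mem_univ p₀) h
    exact hp₀ (hgc ▸ hg0)

/-- Positivity and faithfulness of the trace `Tr₀` (part (i) of the paper's
Main Theorem), in the free-probability instance: the Hermitian form
`Σ_{p,q} conj(c_p) c_q τ(w_p * ++ w_q)` is a nonnegative real number and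
vanishes only if all coefficients vanish. -/
theorem tau_positive_faithful {X : Type*} (m : ℕ) (w : Fin m → List X)
    (hw : Function.Injective w) (c : Fin m → ℂ) :
    0 ≤ (∑ p : Fin m, ∑ q : Fin m,
        (starRingEnd ℂ) (c p) * c q * (tau ((w p).reverse ++ w q) : ℂ)) ∧
    ((∑ p : Fin m, ∑ q : Fin m,
        (starRingEnd ℂ) (c p) * c q * (tau ((w p).reverse ++ w q) : ℂ)) = 0 →
      c = 0) := aux_tau_positive_faithful m w hw c
end
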